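/- arXiv:2403.15904 — 11 statements merged into one kernel-verified Lean document; each statement's English description precedes it below -/
import Mathlib

section
/- Let λ be an infinite regular cardinal and X a linearly ordered set with |X| = λ. Then X contains a subset order-isomorphic to λ, or a subset order-isomorphic to λ with the reverse order, or a subset Y of order type ω (or ω reversed) that is λ-full in X. -/
open Cardinal Set

universe u

/-- `Y` is `l`-full on the right in `X`: for every `y ∈ Y`, the union of the
intervals `(y, y')_X` over larger elements `y' ∈ Y` has cardinality `l`. -/
def FullRight {X : Type u} [LinearOrder X] (l : Cardinal.{u}) (Y : Set X) : Prop :=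
  ∀ y ∈ Y, #{x : X | ∃ y' ∈ Y, y < y' ∧ y < x ∧ x < y'} = l

/-- `Y` is `l`-full on the left in `X`. -/
def FullLeft {X : Type u} [LinearOrder X] (l : Cardinal.{u}) (Y : Set X) : Prop :=
  ∀ y ∈ Y, #{x : X | ∃ y' ∈ Y, y' < y ∧ y' < x ∧ x < y} = l

/-- `Y` is completely `l`-full in `X`: every interval of `X` between two
elements of `Y` has cardinality `l`. -/
def CompletelyFull {X : Type u} [LinearOrder X] (l : Cardinal.{u}) (Y : Set X) : Prop :=
  ∀ y ∈ Y, ∀ y' ∈ Y, y < y' → #{x : X | y < x ∧ x < y'} = l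

/-!
Call `y` near `x` when the closed interval between them has fewer than `λ` points.
If some point has `λ` many near points, then `λ` of them lie on one side of it, say above,
and every initial segment of these lies in an interval of size `< λ`; by regularity any
`< λ` of them are bounded above by another one, so a transfinite recursion yields a copy
of `λ` (or of its reverse). Otherwise every point has fewer than `λ` near points, so one
can pick an `ω`-sequence of pairwise far points; by Erdős–Szekeres it has a monotone
subsequence, and consecutive terms of it enclose `λ` points, which is `λ`-fullness.
-/

namespace Cardinal

variable {α : Type u} {l : Cardinal.{u}}

theorem exists_notMem_of_mk_lt_mk {s : Set α} (h : #s < #α) : ∃ a, a ∉ s := by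
  by_contra! hs
  exact h.ne (by rw [eq_univ_of_forall hs, mk_univ])

theorem exists_strictMono_toType_ord_of_forall_exists_gt [Preorder α]
    (h : ∀ s : Set α, #s < l → ∃ c, ∀ a ∈ s, a < c) :
    ∃ f : l.ord.ToType → α, StrictMono f := by
  have hIio (i : l.ord.ToType) : #(Iio i) < l := by simpa using mk_Iio_lt i
  choose bound hbound using h
  let f : l.ord.ToType → α := WellFoundedLT.fix fun i rec =>
    bound (range fun j : Iio i => rec j j.2) (mk_range_le.trans_lt (hIio i))
  refine ⟨f, fun j i hji => ?_⟩
  rw [show f i = _ from WellFoundedLT.fix_eq _ i]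
  exact hbound _ _ _ ⟨⟨j, hji⟩, rfl⟩

theorem exists_strictMono_toType_ord_of_forall_mk_Iic_lt [LinearOrder α] (hl : l.IsRegular)
    (hα : l ≤ #α) (hIic : ∀ a : α, #(Iic a) < l) :
    ∃ f : l.ord.ToType → α, StrictMono f := by
  refine exists_strictMono_toType_ord_of_forall_exists_gt fun s hs => ?_
  have hsmall : #(⋃ a ∈ s, Iic a) < l :=
    (card_biUnion_lt_iff_forall_of_isRegular hl hs).2 fun a _ => hIic a
  obtain ⟨c, hc⟩ := exists_notMem_of_mk_lt_mk (hsmall.trans_le hα)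
  exact ⟨c, fun a ha => not_le.1 fun hca => hc (mem_biUnion ha hca)⟩

end Cardinal

section NearPoints

variable {X : Type u} [LinearOrder X] {l : Cardinal.{u}}

theorem exists_strictMono_of_le_mk_near_Ici (hl : l.IsRegular) {x : X}
    (hx : l ≤ #{y | x ≤ y ∧ #(uIcc x y) < l}) : ∃ f : l.ord.ToType → X, StrictMono f := by
  have hIic (v : {y | x ≤ y ∧ #(uIcc x y) < l}) : #(Iic v) < l := by
    have hmem (w : Iic v) : (w.1 : X) ∈ uIcc x v.1 := mem_uIcc_of_le w.1.2.1 w.2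
    exact (mk_le_of_injective (f := fun w => (⟨w.1.1, hmem w⟩ : uIcc x v.1))
      fun w w' h => by simpa [Subtype.ext_iff] using h).trans_lt v.2.2
  obtain ⟨f, hf⟩ := exists_strictMono_toType_ord_of_forall_mk_Iic_lt hl hx hIic
  exact ⟨_, (Subtype.strictMono_coe _).comp hf⟩

theorem exists_strictAnti_of_le_mk_near_Iic (hl : l.IsRegular) {x : X}
    (hx : l ≤ #{y | y ≤ x ∧ #(uIcc x y) < l}) : ∃ f : l.ord.ToType → X, StrictAnti f := by
  have hdual (y : Xᵒᵈ) : #(uIcc (OrderDual.toDual x) y) = #(uIcc x (OrderDual.ofDual y)) := by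
    rw [← OrderDual.toDual_ofDual y, uIcc_toDual]; rfl
  obtain ⟨f, hf⟩ := exists_strictMono_of_le_mk_near_Ici (X := Xᵒᵈ) hl (x := OrderDual.toDual x)
    (by simp only [hdual]; exact hx)
  exact ⟨fun i => OrderDual.ofDual (f i), fun _ _ h => hf h⟩

theorem exists_strictMono_or_strictAnti_of_le_mk_near (hl : l.IsRegular) {x : X}
    (hx : l ≤ #{y | #(uIcc x y) < l}) :
    (∃ f : l.ord.ToType → X, StrictMono f) ∨ (∃ f : l.ord.ToType → X, StrictAnti f) := by
  have hcover : {y | #(uIcc x y) < l} ⊆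
      {y | x ≤ y ∧ #(uIcc x y) < l} ∪ {y | y ≤ x ∧ #(uIcc x y) < l} := fun y hy =>
    (le_total x y).imp (⟨·, hy⟩) (⟨·, hy⟩)
  refine or_iff_not_and_not.2 fun h =>
    hx.not_gt ((mk_le_mk_of_subset hcover).trans_lt ((mk_union_le _ _).trans_lt ?_))
  exact add_lt_of_lt hl.aleph0_le
    (not_le.1 fun h' => h.1 (exists_strictMono_of_le_mk_near_Ici hl h'))
    (not_le.1 fun h' => h.2 (exists_strictAnti_of_le_mk_near_Iic hl h'))

theorem exists_seq_pairwise_le_mk_uIcc (hl : l.IsRegular) (hX : l ≤ #X)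
    (hnear : ∀ x : X, #{y | #(uIcc x y) < l} < l) :
    ∃ a : ℕ → X, Pairwise fun m n => l ≤ #(uIcc (a m) (a n)) := by
  have hfar (s : Finset X) : ∃ y, True ∧ ∀ x ∈ s, l ≤ #(uIcc x y) := by
    have hs : #(s : Set X) < l := s.finite_toSet.lt_aleph0.trans_le hl.aleph0_le
    have hsmall : #(⋃ x ∈ (s : Set X), {y | #(uIcc x y) < l}) < l :=
      (card_biUnion_lt_iff_forall_of_isRegular hl hs).2 fun x _ => hnear x
    obtain ⟨y, hy⟩ := exists_notMem_of_mk_lt_mk (hsmall.trans_le hX)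
    exact ⟨y, trivial, fun x hx => not_lt.1 fun hxy => hy (mem_biUnion hx hxy)⟩
  obtain ⟨a, -, ha⟩ := exists_seq_of_forall_finset_exists _ _ fun s _ => hfar s
  refine ⟨a, fun m n hmn => hmn.lt_or_gt.elim (ha m n) fun hnm => ?_⟩
  simpa only [uIcc_comm] using ha n m hnm

theorem le_mk_Ioo_of_le_mk_Icc (hl : ℵ₀ ≤ l) {p q : X} (hpq : p ≤ q) (h : l ≤ #(Icc p q)) :
    l ≤ #(Ioo p q) := by
  by_contra! h'
  have hcover : Icc p q ⊆ Ioo p q ∪ {p, q} := sdiff_subset_iff.1 (Icc_sdiff_Ioo_same hpq).subset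
  exact h.not_gt ((mk_le_mk_of_subset hcover).trans_lt ((mk_union_le _ _).trans_lt
    (add_lt_of_lt hl h' ((toFinite _).lt_aleph0.trans_le hl))))

theorem fullRight_range_of_le_mk_Ioo (hX : #X = l) {f : ℕ → X} (hf : StrictMono f)
    (hgap : ∀ n, l ≤ #(Ioo (f n) (f (n + 1)))) : FullRight l (range f) := by
  rintro _ ⟨n, rfl⟩
  refine le_antisymm (hX ▸ mk_set_le _) ((hgap n).trans (mk_le_mk_of_subset ?_))
  exact fun z hz => ⟨f (n + 1), mem_range_self _, hf n.lt_succ_self, hz⟩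

theorem fullLeft_range_of_le_mk_Ioo (hX : #X = l) {f : ℕ → X} (hf : StrictAnti f)
    (hgap : ∀ n, l ≤ #(Ioo (f (n + 1)) (f n))) : FullLeft l (range f) := by
  rintro _ ⟨n, rfl⟩
  refine le_antisymm (hX ▸ mk_set_le _) ((hgap n).trans (mk_le_mk_of_subset ?_))
  exact fun z hz => ⟨f (n + 1), mem_range_self _, hf n.lt_succ_self, hz⟩

theorem exists_strictMono_fullRight_or_strictAnti_fullLeft (hl : ℵ₀ ≤ l) (hX : #X = l)
    {a : ℕ → X} (ha : Pairwise fun m n => l ≤ #(uIcc (a m) (a n))) :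
    (∃ f : ℕ → X, StrictMono f ∧ FullRight l (range f)) ∨
    (∃ f : ℕ → X, StrictAnti f ∧ FullLeft l (range f)) := by
  have hinj : Function.Injective a := fun m n hmn => by
    by_contra hne
    have h1 : l ≤ #(uIcc (a m) (a n)) := ha hne
    rw [hmn, uIcc_self, mk_singleton] at h1
    exact h1.not_gt (one_lt_aleph0.trans_le hl)
  have hsucc (g : ℕ ↪o ℕ) (n : ℕ) : l ≤ #(uIcc (a (g n)) (a (g (n + 1)))) :=
    ha (g.injective.ne n.succ_ne_self.symm)
  obtain ⟨g, hg | hg⟩ := exists_increasing_or_nonincreasing_subseq (· < ·) a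
  · have hmono : StrictMono (a ∘ g) := fun m n hmn => hg m n hmn
    refine Or.inl ⟨a ∘ g, hmono, fullRight_range_of_le_mk_Ioo hX hmono fun n => ?_⟩
    have hle := (hmono n.lt_succ_self).le
    exact le_mk_Ioo_of_le_mk_Icc hl hle (uIcc_of_le hle ▸ hsucc g n)
  · have hanti : StrictAnti (a ∘ g) := fun m n hmn =>
      (not_lt.1 (hg m n hmn)).lt_of_ne ((hinj.comp g.injective).ne hmn.ne')
    refine Or.inr ⟨a ∘ g, hanti, fullLeft_range_of_le_mk_Ioo hX hanti fun n => ?_⟩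
    have hle := (hanti n.lt_succ_self).le
    exact le_mk_Ioo_of_le_mk_Icc hl hle (uIcc_of_ge hle ▸ hsucc g n)

end NearPoints

/-- Theorem 2.2: a linear order of infinite regular cardinality `l` has a
subset of order type `l` or reverse type `l`, or an `ω`- or `ω←`-ordered
`l`-full subset. -/
theorem stmt0 (l : Cardinal.{u}) (hl : l.IsRegular) (X : Type u) [LinearOrder X]
    (hX : #X = l) :
    (∃ f : l.ord.ToType → X, StrictMono f) ∨
    (∃ f : l.ord.ToType → X, StrictAnti f) ∨
    (∃ f : ℕ → X, StrictMono f ∧ FullRight l (Set.range f)) ∨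
    (∃ f : ℕ → X, StrictAnti f ∧ FullLeft l (Set.range f)) := by
  by_cases hnear : ∃ x : X, l ≤ #{y | #(uIcc x y) < l}
  · obtain ⟨x, hx⟩ := hnear
    exact (exists_strictMono_or_strictAnti_of_le_mk_near hl hx).elim Or.inl (Or.inr ∘ Or.inl)
  · push Not at hnear
    obtain ⟨a, ha⟩ := exists_seq_pairwise_le_mk_uIcc hl hX.ge hnear
    exact Or.inr (Or.inr (exists_strictMono_fullRight_or_strictAnti_fullLeft hl.aleph0_le hX ha))
end

section
/- Let λ be an infinite regular cardinal and X a linearly ordered set with |X| = λ. Suppose every subset Y ⊆ X of cardinality λ contains an element y such that both the set of elements of Y below y and the set of elements of Y above y have cardinality λ. Then X contains a strictly increasing ω-sequence (y_n) such that for every n, the interval (y_n, y_{n+1})_X has cardinality λ; in particular X has a completely λ-full subset of order type ω. -/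
open Cardinal Set

universe u

noncomputable def auxSeq (l : Cardinal.{u}) (X : Type u) [LinearOrder X]
    (hsplit : ∀ Y : Set X, #Y = l →
      ∃ y ∈ Y, #{z ∈ Y | z < y} = l ∧ #{z ∈ Y | y < z} = l)
    (h0 : #(Set.univ : Set X) = l) : ℕ → {Y : Set X // #Y = l}
  | 0 => ⟨Set.univ, h0⟩
  | n+1 =>
    let Y := auxSeq l X hsplit h0 n
    ⟨{z ∈ Y.1 | (hsplit Y.1 Y.2).choose < z},
      (hsplit Y.1 Y.2).choose_spec.2.2⟩

/-- Case (2) of Theorem 2.2: under the splitting hypothesis `(∗∗)`, `X`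
contains a strictly increasing `ω`-sequence with all consecutive intervals of
cardinality `l`; in particular a completely `l`-full subset of order type `ω`. -/
theorem stmt1 (l : Cardinal.{u}) (hl : l.IsRegular) (X : Type u) [LinearOrder X]
    (hX : #X = l)
    (hsplit : ∀ Y : Set X, #Y = l →
      ∃ y ∈ Y, #{z ∈ Y | z < y} = l ∧ #{z ∈ Y | y < z} = l) :
    ∃ f : ℕ → X, StrictMono f ∧
      (∀ n : ℕ, #{x : X | f n < x ∧ x < f (n + 1)} = l) ∧
      CompletelyFull l (Set.range f) := by
  have h0 : #(Set.univ : Set X) = l := by simpa using hX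
  set Ys := auxSeq l X hsplit h0 with hYs
  set f : ℕ → X := fun n => (hsplit (Ys n).1 (Ys n).2).choose with hf
  have hmem : ∀ n, f n ∈ (Ys n).1 := fun n =>
    (hsplit (Ys n).1 (Ys n).2).choose_spec.1
  have hbelow : ∀ n, #{z ∈ (Ys n).1 | z < f n} = l := fun n =>
    (hsplit (Ys n).1 (Ys n).2).choose_spec.2.1
  have hsucc : ∀ n, (Ys (n+1)).1 = {z ∈ (Ys n).1 | f n < z} := fun n => rfl
  have hlt : ∀ n, f n < f (n + 1) := by
    intro n
    have := hmem (n + 1)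
    rw [hsucc n] at this
    exact this.2
  have hmono : StrictMono f := strictMono_nat_of_lt_succ hlt
  have hint : ∀ n : ℕ, #{x : X | f n < x ∧ x < f (n + 1)} = l := by
    intro n
    refine le_antisymm (hX ▸ Cardinal.mk_set_le _) ?_
    have hsub : {z ∈ (Ys (n+1)).1 | z < f (n+1)} ⊆ {x : X | f n < x ∧ x < f (n+1)} := by
      intro z hz
      rw [hsucc n] at hz
      exact ⟨hz.1.2, hz.2⟩
    calc l = #{z ∈ (Ys (n+1)).1 | z < f (n+1)} := (hbelow (n+1)).symm
      _ ≤ _ := Cardinal.mk_le_mk_of_subset hsub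
  refine ⟨f, hmono, hint, ?_⟩
  rintro _ ⟨m, rfl⟩ _ ⟨n, rfl⟩ hmn
  have hmn' : m < n := hmono.lt_iff_lt.mp hmn
  refine le_antisymm (hX ▸ Cardinal.mk_set_le _) ?_
  have hle : f (m + 1) ≤ f n := hmono.monotone hmn'
  have hsub : {x : X | f m < x ∧ x < f (m+1)} ⊆ {x : X | f m < x ∧ x < f n} :=
    fun x hx => ⟨hx.1, lt_of_lt_of_le hx.2 hle⟩
  calc l = #{x : X | f m < x ∧ x < f (m+1)} := (hint m).symm
    _ ≤ _ := Cardinal.mk_le_mk_of_subset hsub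
end

section
/- Let λ be an infinite regular cardinal and X a linearly ordered set with |X| = λ such that every subset Y ⊆ X of cardinality λ contains an element y with both {z ∈ Y : z < y} and {z ∈ Y : z > y} of cardinality λ. Then for every countable ordinal α, X contains a completely λ-full subset of order type α. -/
open Cardinal Set

universe u

/-!
Splitting `X` at a chosen point, then each half at a chosen point, and so on, gives a binary
tree of sets of size `λ`. The chosen points form a countable dense linear order, and strictly
between two of them lies a whole node of the tree, hence `λ` points of `X`. Every countable
ordinal embeds into a countable dense linear order (Cantor).
-/

section SplittingTree

variable {X : Type*} [LinearOrder X] (pick : Set X → X)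

def splitStep (Y : Set X) : Bool → Set X
  | false => {z ∈ Y | z < pick Y}
  | true => {z ∈ Y | pick Y < z}

def splitNode (R : Set X) : List Bool → Set X
  | [] => R
  | b :: σ => splitNode (splitStep pick R b) σ

def splitPoint (R : Set X) (σ : List Bool) : X :=
  pick (splitNode pick R σ)

theorem splitStep_subset (Y : Set X) (b : Bool) : splitStep pick Y b ⊆ Y := by
  cases b <;> exact fun _ hz => hz.1

theorem splitNode_subset (R : Set X) (σ : List Bool) : splitNode pick R σ ⊆ R := by
  induction σ generalizing R with
  | nil => exact subset_rfl
  | cons b σ ih => exact (ih _).trans (splitStep_subset pick R b)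

theorem splitNode_append (R : Set X) (σ τ : List Bool) :
    splitNode pick R (σ ++ τ) = splitNode pick (splitNode pick R σ) τ := by
  induction σ generalizing R with
  | nil => rfl
  | cons b σ ih => exact ih _

theorem splitNode_false_cons_subset (R : Set X) (σ : List Bool) :
    splitNode pick R (false :: σ) ⊆ Iio (pick R) :=
  fun _ hx => (splitNode_subset pick _ σ hx).2

theorem splitNode_true_cons_subset (R : Set X) (σ : List Bool) :
    splitNode pick R (true :: σ) ⊆ Ioi (pick R) :=
  fun _ hx => (splitNode_subset pick _ σ hx).2

theorem splitNode_append_false (R : Set X) (σ : List Bool) :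
    splitNode pick R (σ ++ [false]) = {z ∈ splitNode pick R σ | z < splitPoint pick R σ} := by
  rw [splitNode_append]; rfl

theorem splitNode_append_true (R : Set X) (σ : List Bool) :
    splitNode pick R (σ ++ [true]) = {z ∈ splitNode pick R σ | splitPoint pick R σ < z} := by
  rw [splitNode_append]; rfl

theorem splitNode_true_cons_append_false_subset (R : Set X) (σ : List Bool) :
    splitNode pick R (true :: σ ++ [false]) ⊆
      Ioo (pick R) (splitPoint pick R (true :: σ)) := by
  rw [splitNode_append_false]
  exact fun _ hx => ⟨splitNode_true_cons_subset pick R σ hx.1, hx.2⟩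

theorem splitNode_false_cons_append_true_subset (R : Set X) (σ : List Bool) :
    splitNode pick R (false :: σ ++ [true]) ⊆
      Ioo (splitPoint pick R (false :: σ)) (pick R) := by
  rw [splitNode_append_true]
  exact fun _ hx => ⟨hx.2, splitNode_false_cons_subset pick R σ hx.1⟩

variable {pick} {P : Set X → Prop}
  (hpick : ∀ Y, P Y → pick Y ∈ Y ∧ ∀ b, P (splitStep pick Y b))
include hpick

theorem splitNode_prop {R : Set X} (hR : P R) (σ : List Bool) : P (splitNode pick R σ) := by
  induction σ generalizing R with
  | nil => exact hR
  | cons b σ ih => exact ih ((hpick R hR).2 b)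

theorem splitPoint_mem {R : Set X} (hR : P R) (σ : List Bool) :
    splitPoint pick R σ ∈ splitNode pick R σ :=
  (hpick _ (splitNode_prop hpick hR σ)).1

theorem splitPoint_false_cons_lt {R : Set X} (hR : P R) (σ : List Bool) :
    splitPoint pick R (false :: σ) < pick R :=
  splitNode_false_cons_subset pick R σ (splitPoint_mem hpick hR _)

theorem lt_splitPoint_true_cons {R : Set X} (hR : P R) (σ : List Bool) :
    pick R < splitPoint pick R (true :: σ) :=
  splitNode_true_cons_subset pick R σ (splitPoint_mem hpick hR _)

theorem exists_splitNode_subset_Ioo {R : Set X} (hR : P R) (σ τ : List Bool)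
    (h : splitPoint pick R σ < splitPoint pick R τ) :
    ∃ ν, splitNode pick R ν ⊆ Ioo (splitPoint pick R σ) (splitPoint pick R τ) := by
  induction σ generalizing R τ with
  | nil =>
    match τ with
    | [] => exact (lt_irrefl _ h).elim
    | false :: τ => exact ((splitPoint_false_cons_lt hpick hR τ).not_gt h).elim
    | true :: τ => exact ⟨_, splitNode_true_cons_append_false_subset pick R τ⟩
  | cons a σ ih =>
    match a, τ with
    | false, [] => exact ⟨_, splitNode_false_cons_append_true_subset pick R σ⟩
    | true, [] => exact ((lt_splitPoint_true_cons hpick hR σ).not_gt h).elim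
    | true, false :: τ =>
      exact (((splitPoint_false_cons_lt hpick hR τ).trans
        (lt_splitPoint_true_cons hpick hR σ)).not_gt h).elim
    | false, true :: τ =>
      refine ⟨true :: τ ++ [false], fun x hx => ?_⟩
      obtain ⟨hRx, hxτ⟩ := splitNode_true_cons_append_false_subset pick R τ hx
      exact ⟨(splitPoint_false_cons_lt hpick hR σ).trans hRx, hxτ⟩
    | false, false :: τ =>
      obtain ⟨ν, hν⟩ := ih ((hpick R hR).2 false) τ h
      exact ⟨false :: ν, hν⟩
    | true, true :: τ =>
      obtain ⟨ν, hν⟩ := ih ((hpick R hR).2 true) τ h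
      exact ⟨true :: ν, hν⟩

theorem denselyOrdered_range_splitPoint {R : Set X} (hR : P R) :
    DenselyOrdered (range (splitPoint pick R)) where
  dense := by
    rintro ⟨_, σ, rfl⟩ ⟨_, τ, rfl⟩ h
    obtain ⟨ν, hν⟩ := exists_splitNode_subset_Ioo hpick hR σ τ h
    exact ⟨⟨_, ν, rfl⟩, hν (splitPoint_mem hpick hR ν)⟩

theorem nontrivial_range_splitPoint {R : Set X} (hR : P R) :
    Nontrivial (range (splitPoint pick R)) :=
  ⟨⟨_, [], rfl⟩, ⟨_, [true], rfl⟩,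
    fun h => (lt_splitPoint_true_cons hpick hR []).ne (congrArg Subtype.val h)⟩

end SplittingTree

theorem CompletelyFull.mono {X : Type u} [LinearOrder X] {l : Cardinal.{u}} {Y Z : Set X}
    (hYZ : Y ⊆ Z) (hZ : CompletelyFull l Z) : CompletelyFull l Y :=
  fun _ hy _ hy' => hZ _ (hYZ hy) _ (hYZ hy')

theorem exists_countable_dense_completelyFull {X : Type u} [LinearOrder X] {l : Cardinal.{u}}
    (hX : #X = l)
    (hsplit : ∀ Y : Set X, #Y = l →
      ∃ y ∈ Y, #{z ∈ Y | z < y} = l ∧ #{z ∈ Y | y < z} = l) :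
    ∃ S : Set X, S.Countable ∧ Nontrivial S ∧ DenselyOrdered S ∧ CompletelyFull l S := by
  have huniv : #(univ : Set X) = l := by rw [mk_univ, hX]
  have : Nonempty X := let ⟨y, _⟩ := hsplit univ huniv; ⟨y⟩
  choose! pick hpick using hsplit
  have hsplitStep : ∀ Y : Set X, #Y = l → pick Y ∈ Y ∧ ∀ b, #(splitStep pick Y b) = l :=
    fun Y hY => ⟨(hpick Y hY).1, fun b => by cases b <;> simp [splitStep, hpick Y hY]⟩
  refine ⟨range (splitPoint pick univ), countable_range _,
    nontrivial_range_splitPoint hsplitStep huniv,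
    denselyOrdered_range_splitPoint hsplitStep huniv, ?_⟩
  rintro _ ⟨σ, rfl⟩ _ ⟨τ, rfl⟩ h
  obtain ⟨ν, hν⟩ := exists_splitNode_subset_Ioo hsplitStep huniv σ τ h
  refine le_antisymm (hX ▸ mk_set_le _) ?_
  calc l = #(splitNode pick univ ν) := (splitNode_prop hsplitStep huniv ν).symm
    _ ≤ _ := mk_le_mk_of_subset hν

theorem stmt2_general (l : Cardinal.{u}) (X : Type u) [LinearOrder X]
    (hX : #X = l)
    (hsplit : ∀ Y : Set X, #Y = l →
      ∃ y ∈ Y, #{z ∈ Y | z < y} = l ∧ #{z ∈ Y | y < z} = l) :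
    ∀ α : Ordinal.{u}, α.card ≤ Cardinal.aleph0 →
      ∃ f : α.ToType → X, StrictMono f ∧ CompletelyFull l (Set.range f) := by
  intro α hα
  obtain ⟨S, hS, _, _, hfull⟩ := exists_countable_dense_completelyFull hX hsplit
  have : Countable S := hS.to_subtype
  have : Countable α.ToType := mk_le_aleph0_iff.mp (by rwa [mk_toType])
  obtain ⟨e⟩ := Order.embedding_from_countable_to_dense α.ToType S
  exact ⟨Subtype.val ∘ e, Subtype.strictMono_coe _ |>.comp e.strictMono,
    hfull.mono ((range_comp_subset_range _ _).trans Subtype.range_coe.subset)⟩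

/-- Corollary 2.4: under the splitting hypothesis, `X` contains completely
`l`-full subsets of every countable order type `α`. -/
theorem stmt2 (l : Cardinal.{u}) (hl : l.IsRegular) (X : Type u) [LinearOrder X]
    (hX : #X = l)
    (hsplit : ∀ Y : Set X, #Y = l →
      ∃ y ∈ Y, #{z ∈ Y | z < y} = l ∧ #{z ∈ Y | y < z} = l) :
    ∀ α : Ordinal.{u}, α.card ≤ Cardinal.aleph0 →
      ∃ f : α.ToType → X, StrictMono f ∧ CompletelyFull l (Set.range f) :=
  stmt2_general l X hX hsplit
end

section
/- Let κ be an infinite cardinal and let T = {0,1}^κ with the lexicographic order. Then every well-ordered subset of T has cardinality at most κ, and every reversely well-ordered subset of T has cardinality at most κ. -/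
open Cardinal Set Ordinal

universe u

/-!
Embed a well-ordered set `α` strictly monotonically into `{0,1}^ι`, `ι` well-ordered, and induct
on the order type of `ι`. For each non-maximal `a`, let `D a` be the first coordinate where `a`
and its successor differ. If `a < b` lie in the same fibre `D = δ`, then `b` is at least the
successor of `a` but has a `0` at `δ`, so `a` and `b` already differ below `δ`: restriction to
`Iio δ` is injective on the fibre, and the induction hypothesis bounds it by `#ι + ℵ₀`. With at
most one maximal element and `#ι` fibres, `#α ≤ #ι + ℵ₀`. Reverse well-orders reduce to well-orders
by flipping all bits.
-/

section Restrict

variable {ι : Type*} [LinearOrder ι] {β : ι → Type*} [∀ i, PartialOrder (β i)]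

def Lex.restrictIio (δ : ι) (x : Lex (∀ i, β i)) : Lex (∀ i : Iio δ, β i) :=
  toLex fun j => ofLex x j

theorem Lex.restrictIio_mono (δ : ι) : Monotone (Lex.restrictIio (β := β) δ) := by
  intro x y hxy
  obtain ⟨i, hagree, hi⟩ | rfl := hxy.lt_or_eq
  · by_cases hiδ : i < δ
    · exact le_of_lt ⟨⟨i, hiδ⟩, fun j hj => hagree j hj, hi⟩
    · exact le_of_eq <| congrArg toLex <| funext fun j => hagree j (j.2.trans_le (not_lt.1 hiδ))
  · exact le_rfl

theorem Lex.lt_of_restrictIio_eq {x y : Lex (∀ i, β i)} {δ : ι}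
    (h : Lex.restrictIio δ x = Lex.restrictIio δ y) (hδ : ofLex x δ < ofLex y δ) : x < y :=
  ⟨δ, fun j hj => congrArg (fun z => (ofLex z : ∀ i : Iio δ, β i) ⟨j, hj⟩) h, hδ⟩

theorem Lex.restrictIio_lt_restrictIio {x y z : Lex (∀ i, β i)} {δ : ι} (hxy : x ≤ y)
    (hzy : z ≤ y) (hxz : Lex.restrictIio δ x = Lex.restrictIio δ z) (hyz : ofLex y δ < ofLex z δ) :
    Lex.restrictIio δ x < Lex.restrictIio δ y :=
  (Lex.restrictIio_mono δ hxy).lt_of_ne fun h =>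
    (Lex.lt_of_restrictIio_eq (h.symm.trans hxz) hyz).not_ge hzy

end Restrict

theorem Lex.strictAnti_not {ι : Type*} [LinearOrder ι] :
    StrictAnti fun x : Lex (ι → Bool) => toLex fun i => !ofLex x i := by
  rintro x y ⟨i, hagree, hi⟩
  rw [Bool.lt_iff] at hi
  refine ⟨i, fun j hj => by simp [hagree j hj], ?_⟩
  simp [hi.1, hi.2]

theorem mk_le_of_strictMono_lex_of_forall_Iio {ι α : Type u} [LinearOrder ι]
    [LinearOrder α] [WellFoundedLT α] {c : Cardinal.{u}} (hc : ℵ₀ ≤ c) (hι : #ι ≤ c)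
    (ih : ∀ (δ : ι) (γ : Type u) [LinearOrder γ] [WellFoundedLT γ] (e : γ → Lex (Iio δ → Bool)),
      StrictMono e → #γ ≤ c)
    {e : α → Lex (ι → Bool)} (he : StrictMono e) : #α ≤ c := by
  let : SuccOrder α := .ofLinearWellFoundedLT α
  have hD : ∀ a : α, ¬IsMax a → ∃ δ,
      Lex.restrictIio δ (e a) = Lex.restrictIio δ (e (Order.succ a)) ∧
        ofLex (e a) δ = false ∧ ofLex (e (Order.succ a)) δ = true := fun a ha => by
    obtain ⟨δ, hagree, hδ⟩ := he (Order.lt_succ_of_not_isMax ha)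
    exact ⟨δ, congrArg toLex (funext fun j => hagree j j.2), Bool.lt_iff.1 hδ⟩
  choose D hDagree hDf hDs using hD
  have hfiber : ∀ δ : ι, #{a : α | ∃ ha, D a ha = δ} ≤ c := by
    intro δ
    refine ih δ _ (fun a => Lex.restrictIio δ (e a)) fun a b hab => ?_
    obtain ⟨⟨ha, haδ⟩, hb, hbδ⟩ := And.intro a.2 b.2
    have hagree := hDagree a ha
    have has := hDs a ha
    have hbf := hDf b hb
    rw [haδ] at hagree has
    rw [hbδ] at hbf
    refine Lex.restrictIio_lt_restrictIio (he hab).le (he.monotone (Order.succ_le_of_lt hab))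
      hagree ?_
    rw [hbf, has]
    exact Bool.false_lt_true
  have hmax : #{a : α | IsMax a} ≤ 1 :=
    mk_le_one_iff_set_subsingleton.2 fun a ha b hb => le_antisymm (hb.isTop a) (ha.isTop b)
  have hcover : (univ : Set α) ⊆ {a | IsMax a} ∪ ⋃ δ, {a | ∃ ha, D a ha = δ} := fun a _ => by
    by_cases ha : IsMax a
    · exact .inl ha
    · exact .inr (mem_iUnion.2 ⟨D a ha, ha, rfl⟩)
  calc #α = #(univ : Set α) := mk_univ.symm
    _ ≤ #{a : α | IsMax a} + #(⋃ δ, {a | ∃ ha, D a ha = δ}) :=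
      (mk_le_mk_of_subset hcover).trans (mk_union_le _ _)
    _ ≤ c + c * c := add_le_add (hmax.trans (one_le_aleph0.trans hc))
      ((mk_iUnion_le _).trans (mul_le_mul' hι (ciSup_le' hfiber)))
    _ = c := by rw [mul_eq_self hc, add_eq_self hc]

theorem mk_le_of_strictMono_lex {ι α : Type u} [LinearOrder ι] [WellFoundedLT ι]
    [LinearOrder α] [WellFoundedLT α] {e : α → Lex (ι → Bool)} (he : StrictMono e) :
    #α ≤ #ι + ℵ₀ := by
  induction h : typeLT ι using WellFoundedLT.induction generalizing ι α with
  | _ o IH =>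
    refine mk_le_of_strictMono_lex_of_forall_Iio le_add_self le_self_add
      (fun δ γ _ _ e' he' => ?_) he
    have hδ : typeLT (Iio δ) < o := h ▸ typein_lt_type (· < ·) δ
    exact (IH _ hδ he' rfl).trans (by gcongr; exact mk_set_le _)

/-- Lemma 2.8: in `{0,1}^κ` with the lexicographic order, every well-ordered
subset and every reversely well-ordered subset has cardinality at most `κ`. -/
theorem stmt6 (κ : Cardinal.{u}) (hκ : Cardinal.aleph0 ≤ κ) :
    (∀ S : Set (Lex (κ.ord.ToType → Bool)), S.WellFoundedOn (· < ·) → #S ≤ κ) ∧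
    (∀ S : Set (Lex (κ.ord.ToType → Bool)), S.WellFoundedOn (· > ·) → #S ≤ κ) := by
  have hbound : ∀ {α : Type u} [LinearOrder α] [WellFoundedLT α]
      {e : α → Lex (κ.ord.ToType → Bool)}, StrictMono e → #α ≤ κ := fun he => by
    simpa [add_eq_left hκ hκ] using mk_le_of_strictMono_lex he
  refine ⟨fun S hS => ?_, fun S hS => ?_⟩
  · have : WellFoundedLT S := ⟨hS⟩
    exact hbound (Subtype.strictMono_coe _)
  · have : WellFoundedLT Sᵒᵈ := ⟨hS⟩
    exact hbound (α := Sᵒᵈ) (Lex.strictAnti_not.comp (Subtype.strictMono_coe _).dual_left)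
end

section
/- For every infinite cardinal κ there exists a linear order X of cardinality 2^κ that contains no well-ordered subset of cardinality greater than κ and no reversely well-ordered subset of cardinality greater than κ; in particular X contains no well-ordered 2^κ-full subset of order type greater than κ. -/
open Cardinal Set

universe u

/-!
Take `X = Lex (κ → Bool)`. A well-ordered subset of `Lex (ι → Bool)`, with `ι` well-ordered
and `#ι ≤ μ` infinite, has at most `μ` elements, by induction on the order type of `ι`: send
each non-maximal element `a` to the first coordinate `i` at which `a` and its successor `a⁺`
differ. Two elements sent to the same `i` already differ below `i` (otherwise the later one
would lie strictly between the earlier one and its successor), so restriction to `Iio i` is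
strictly monotone on each fibre, which therefore has at most `μ` elements; there are at most
`μ` fibres. Reversely well-ordered subsets are handled by flipping every bit.
-/

open Order

namespace Pi.Lex

section Restrict

variable {ι : Type*} [LinearOrder ι] {β : Type*}

theorem lt_iff_exists [LT β] {x y : Lex (ι → β)} :
    x < y ↔ ∃ i, (∀ j < i, ofLex x j = ofLex y j) ∧ ofLex x i < ofLex y i :=
  Iff.rfl

theorem strictAnti_map [PartialOrder β] {γ : Type*} [PartialOrder γ] {g : β → γ}
    (hg : StrictAnti g) :
    StrictAnti fun x : Lex (ι → β) => toLex (g ∘ ofLex x) := by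
  rintro x y ⟨i, hagree, hlt⟩
  exact ⟨i, fun j hj => congrArg g (hagree j hj).symm, hg hlt⟩

def restrictIio (i : ι) (x : Lex (ι → β)) : Lex (Iio i → β) :=
  toLex fun j => ofLex x j

theorem restrictIio_lt_restrictIio [LT β] {i k : ι} {x y : Lex (ι → β)} (hk : k < i)
    (hagree : ∀ j < k, ofLex x j = ofLex y j) (hlt : ofLex x k < ofLex y k) :
    restrictIio i x < restrictIio i y :=
  ⟨⟨k, hk⟩, fun j hj => hagree j hj, hlt⟩

end Restrict

section Jumps

variable {ι : Type*} [LinearOrder ι] {α : Type*} [LinearOrder α] [SuccOrder α]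

def jumpsAt {β : Type*} [PartialOrder β] (f : α → Lex (ι → β)) (i : ι) : Set α :=
  {a | (∀ j < i, ofLex (f a) j = ofLex (f (succ a)) j) ∧ ofLex (f a) i < ofLex (f (succ a)) i}

theorem setOf_not_isMax_subset_iUnion_jumpsAt {β : Type*} [PartialOrder β]
    {f : α → Lex (ι → β)} (hf : StrictMono f) : {a | ¬IsMax a} ⊆ ⋃ i, jumpsAt f i := fun _ ha =>
  mem_iUnion.2 (hf (lt_succ_of_not_isMax ha))

theorem strictMonoOn_restrictIio_jumpsAt {f : α → Lex (ι → Bool)} (hf : StrictMono f) (i : ι) :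
    StrictMonoOn (restrictIio i ∘ f) (jumpsAt f i) := by
  intro a ha b hb hab
  obtain ⟨k, hagree, hlt⟩ := lt_iff_exists.1 (hf hab)
  rcases lt_or_ge k i with hki | hik
  · exact restrictIio_lt_restrictIio hki hagree hlt
  · have hsucc_le : f (succ a) ≤ f b := hf.monotone (succ_le_of_lt hab)
    have hb_false : ofLex (f b) i = false := (Bool.lt_iff.1 hb.2).1
    have ha_true : ofLex (f (succ a)) i = true := (Bool.lt_iff.1 ha.2).2
    refine absurd (lt_iff_exists.2 ⟨i, fun j hj => ?_, ?_⟩) hsucc_le.not_gt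
    · rw [← hagree j (hj.trans_le hik), ha.1 j hj]
    · rw [hb_false, ha_true]
      exact Bool.false_lt_true

end Jumps

theorem mk_le_of_strictMono_aux {μ : Cardinal.{u}} (hμ : ℵ₀ ≤ μ) (o : Ordinal.{u}) :
    ∀ (ι : Type u) [LinearOrder ι] [WellFoundedLT ι], Ordinal.type (α := ι) (· < ·) = o →
      #ι ≤ μ → ∀ (α : Type u) [LinearOrder α] [WellFoundedLT α] (f : α → Lex (ι → Bool)),
        StrictMono f → #α ≤ μ := by
  induction o using WellFoundedLT.induction with
  | _ o ih =>
  intro ι _ _ hι hιμ α _ _ f hf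
  let := SuccOrder.ofLinearWellFoundedLT α
  have hjumps : ∀ i, #(jumpsAt f i) ≤ μ := fun i =>
    ih _ (hι ▸ Ordinal.typein_lt_type (α := ι) (· < ·) i) (Iio i) rfl
      ((mk_subtype_le _).trans hιμ) (jumpsAt f i) _
      fun a b hab => strictMonoOn_restrictIio_jumpsAt hf i a.2 b.2 hab
  have hmax : #{a : α | IsMax a} ≤ 1 :=
    mk_le_one_iff_set_subsingleton.2 fun a ha b hb => le_antisymm (hb.isTop a) (ha.isTop b)
  have hcover : (univ : Set α) ⊆ ({a | IsMax a} : Set α) ∪ ⋃ i, jumpsAt f i := fun a _ =>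
    (em (IsMax a)).imp id (setOf_not_isMax_subset_iUnion_jumpsAt hf ·)
  calc #α = #(univ : Set α) := mk_univ.symm
    _ ≤ #↥(({a | IsMax a} : Set α) ∪ ⋃ i, jumpsAt f i) := mk_le_mk_of_subset hcover
    _ ≤ 1 + #ι * μ := (mk_union_le _ _).trans (add_le_add hmax ((mk_iUnion_le _).trans
        (mul_le_mul_right (ciSup_le' hjumps) _)))
    _ ≤ μ + μ * μ := add_le_add (one_le_aleph0.trans hμ) (mul_le_mul_left hιμ _)
    _ = μ := by rw [mul_eq_self hμ, add_eq_self hμ]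

theorem mk_le_of_strictMono {ι : Type u} [LinearOrder ι] [WellFoundedLT ι] {μ : Cardinal.{u}}
    (hμ : ℵ₀ ≤ μ) (hι : #ι ≤ μ) {α : Type u} [LinearOrder α] [WellFoundedLT α]
    {f : α → Lex (ι → Bool)} (hf : StrictMono f) : #α ≤ μ :=
  mk_le_of_strictMono_aux hμ _ ι rfl hι α f hf

section WellOrderedSubsets

variable {ι : Type u} [LinearOrder ι] [WellFoundedLT ι] {μ : Cardinal.{u}}
  {S : Set (Lex (ι → Bool))}

theorem mk_le_of_wellFoundedOn_lt (hμ : ℵ₀ ≤ μ) (hι : #ι ≤ μ) (hS : S.WellFoundedOn (· < ·)) :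
    #S ≤ μ :=
  have : WellFoundedLT S := ⟨hS⟩
  mk_le_of_strictMono hμ hι (Subtype.strictMono_coe _)

theorem mk_le_of_wellFoundedOn_gt (hμ : ℵ₀ ≤ μ) (hι : #ι ≤ μ) (hS : S.WellFoundedOn (· > ·)) :
    #S ≤ μ :=
  have : WellFoundedGT S := ⟨hS⟩
  mk_le_of_strictMono (α := Sᵒᵈ) hμ hι
    (StrictAnti.comp (strictAnti_map (compl_strictAnti Bool)) fun _ _ h => h)

end WellOrderedSubsets

end Pi.Lex

/-- Proposition 2.7: for every infinite `κ` there is a linear order of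
cardinality `2 ^ κ` with no (reversely) well-ordered subset of cardinality
`> κ`; in particular no `2 ^ κ`-full (reversely) well-ordered subset of
cardinality `> κ`. -/
theorem stmt7 (κ : Cardinal.{u}) (hκ : Cardinal.aleph0 ≤ κ) :
    ∃ (X : Type u) (_ : LinearOrder X), #X = 2 ^ κ ∧
      (∀ S : Set X, S.WellFoundedOn (· < ·) → #S ≤ κ) ∧
      (∀ S : Set X, S.WellFoundedOn (· > ·) → #S ≤ κ) ∧
      ¬(∃ S : Set X, (S.WellFoundedOn (· < ·) ∨ S.WellFoundedOn (· > ·)) ∧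
        (FullRight (2 ^ κ) S ∨ FullLeft (2 ^ κ) S) ∧ κ < #S) := by
  have hcard : #κ.ord.ToType ≤ κ := (mk_ord_toType κ).le
  have hlt := fun S => Pi.Lex.mk_le_of_wellFoundedOn_lt (S := S) hκ hcard
  have hgt := fun S => Pi.Lex.mk_le_of_wellFoundedOn_gt (S := S) hκ hcard
  refine ⟨Lex (κ.ord.ToType → Bool), inferInstance, ?_, hlt, hgt, ?_⟩
  · change #(κ.ord.ToType → Bool) = 2 ^ κ
    simp
  · rintro ⟨S, hS | hS, -, hκS⟩
    exacts [hκS.not_ge (hlt S hS), hκS.not_ge (hgt S hS)]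
end

section
/- (Urysohn) If X is a linearly ordered set of cardinality greater than 2^{ℵ_α}, then X contains a subset of order type ω_{α+1} or a subset of reverse order type ω_{α+1}. -/
/-!
Let κ = ℵ_α. Embed the ordinal (2^κ)⁺ into X and colour a pair of its points by whether the
well-order and the order of X agree on it (Sierpiński's colouring). The Erdős–Rado partition
relation (2^κ)⁺ → (κ⁺)²₂ yields a homogeneous set of size κ⁺, along whose well-order X is then
increasing or decreasing.

Erdős–Rado: for each point a, choose greedily a transfinite sequence whose entry at stage ξ is a
new point x that every earlier entry z colours as it colours a. The sequence of a cannot stop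
before a has been chosen, and a is recovered from the colour pattern of its sequence below the
stopping stage together with its own position there. So if every sequence stopped before κ⁺,
there would be at most κ⁺ · 2^κ · κ = 2^κ points. A sequence of length κ⁺ is end-homogeneous:
the colour of a pair of entries depends only on the earlier one, and a pigeonhole on that colour
gives the homogeneous set.
-/

open Cardinal Set Ordinal Order

universe u

namespace Cardinal

theorem exists_le_mk_preimage_singleton_of_bool {β : Type u} (f : β → Bool) {θ : Cardinal.{u}}
    (hθ : ℵ₀ ≤ θ) (hβ : θ ≤ #β) : ∃ t, θ ≤ #(f ⁻¹' {t}) := by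
  by_contra! h
  have hunion : f ⁻¹' {true} ∪ f ⁻¹' {false} = Set.univ := by
    ext x; cases f x <;> simp [*]
  refine hβ.not_gt ?_
  calc #β = #(f ⁻¹' {true} ∪ f ⁻¹' {false} : Set β) := by rw [hunion, mk_univ]
    _ ≤ #(f ⁻¹' {true}) + #(f ⁻¹' {false}) := mk_union_le _ _
    _ < θ := add_lt_of_lt hθ (h true) (h false)

theorem nonempty_ord_toType_orderEmbedding {β : Type u} [LinearOrder β] [WellFoundedLT β]
    {κ : Cardinal.{u}} (h : κ ≤ #β) : Nonempty (κ.ord.ToType ↪o β) := by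
  have : typeLT κ.ord.ToType ≤ typeLT β := by
    rwa [type_toType, ord_le, card_type]
  obtain ⟨e⟩ := type_le_iff'.mp this
  exact ⟨e.orderEmbeddingOfLTEmbedding⟩

end Cardinal

namespace ErdosRado

variable {L : Type u}

open Classical in
noncomputable def pick (S : Set L) : Option L :=
  if h : S.Nonempty then some h.some else none

theorem mem_of_pick_eq_some {S : Set L} {x : L} (h : pick S = some x) : x ∈ S := by
  unfold pick at h
  split_ifs at h with hS
  exact Option.some_injective _ h ▸ hS.some_mem

theorem pick_ne_none {S : Set L} {x : L} (hx : x ∈ S) : pick S ≠ none := by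
  simp [pick, show S.Nonempty from ⟨x, hx⟩]

variable (c : L → L → Bool)

/-- The greedy end-homogeneous sequence over `a`; `none` marks a stage with no candidate. -/
noncomputable def endHomSeq (a : L) : Ordinal.{u} → Option L :=
  Ordinal.lt_wf.fix fun ξ s => pick {x | ∀ η (h : η < ξ) z, s η h = some z → z ≠ x ∧ c z x = c z a}

theorem endHomSeq_eq (a : L) (ξ : Ordinal.{u}) :
    endHomSeq c a ξ =
      pick {x | ∀ η < ξ, ∀ z, endHomSeq c a η = some z → z ≠ x ∧ c z x = c z a} :=
  Ordinal.lt_wf.fix_eq _ ξ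

variable {c}

theorem endHomSeq_spec {a x z : L} {η ξ : Ordinal.{u}} (hx : endHomSeq c a ξ = some x)
    (hη : η < ξ) (hz : endHomSeq c a η = some z) : z ≠ x ∧ c z x = c z a := by
  rw [endHomSeq_eq] at hx
  exact mem_of_pick_eq_some hx η hη z hz

theorem exists_endHomSeq_eq_self {a : L} {ξ : Ordinal.{u}} (h : endHomSeq c a ξ = none) :
    ∃ η < ξ, endHomSeq c a η = some a := by
  by_contra! ha
  refine pick_ne_none (x := a) ?_ ((endHomSeq_eq c a ξ).symm.trans h)
  exact fun η hη z hz => ⟨fun hza => ha η hη (hza ▸ hz), rfl⟩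

/-- `pick` is a function of the candidate set, and the candidate set at stage `ξ` is determined
by the earlier entries together with the colours they give to the base point. -/
theorem endHomSeq_eq_endHomSeq {a b : L} {δ : Ordinal.{u}}
    (hcol : ∀ ξ < δ, ∀ z w, endHomSeq c a ξ = some z → endHomSeq c b ξ = some w →
      c z a = c w b) :
    ∀ ξ < δ, endHomSeq c a ξ = endHomSeq c b ξ := by
  intro ξ
  induction ξ using WellFoundedLT.induction with
  | _ ξ IH =>
    intro hξ
    rw [endHomSeq_eq, endHomSeq_eq]
    congr 1
    ext x
    refine forall₂_congr fun η hη => ?_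
    have hab := IH η hη (hη.trans hξ)
    rw [hab]
    refine forall₂_congr fun z hz => ?_
    rw [hcol η (hη.trans hξ) z z (hab ▸ hz) hz]

theorem mk_setOf_endHomSeq_eq_none_le (δ : Ordinal.{u}) :
    #{a | endHomSeq c a δ = none} ≤ 2 ^ δ.card * δ.card := by
  choose! pos hpos_lt hpos using fun a (ha : endHomSeq c a δ = none) => exists_endHomSeq_eq_self ha
  let Φ : {a | endHomSeq c a δ = none} → (δ.ToType → Bool) × δ.ToType := fun a =>
    (fun y => ((endHomSeq c a y).map (c · a)).getD true, ToType.mk ⟨pos a, hpos_lt a a.2⟩)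
  have hΦ : Function.Injective Φ := by
    rintro ⟨a, ha⟩ ⟨b, hb⟩ hab
    simp only [Φ, Prod.mk.injEq, EmbeddingLike.apply_eq_iff_eq] at hab
    obtain ⟨hcol, hpos_eq⟩ := hab
    replace hpos_eq : pos a = pos b := congrArg Subtype.val hpos_eq
    have hseq : ∀ ξ < δ, endHomSeq c a ξ = endHomSeq c b ξ :=
      endHomSeq_eq_endHomSeq fun ξ hξ z w hz hw => by
        simpa [hz, hw] using congrFun hcol (ToType.mk ⟨ξ, hξ⟩)
    refine Subtype.ext (Option.some_injective _ ?_)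
    rw [← hpos a ha, hseq _ (hpos_lt a ha), hpos_eq, hpos b hb]
  simpa [mk_toType] using mk_le_of_injective hΦ

theorem exists_forall_endHomSeq_ne_none {κ : Cardinal.{u}} (hκ : ℵ₀ ≤ κ) (hL : 2 ^ κ < #L) :
    ∃ a, ∀ ξ < (succ κ).ord, endHomSeq c a ξ ≠ none := by
  by_contra! h
  have h2κ : ℵ₀ ≤ 2 ^ κ := hκ.trans (cantor κ).le
  have hcover : (univ : Set L) ⊆ ⋃ y : (succ κ).ord.ToType, {a | endHomSeq c a y = none} := by
    intro a _
    obtain ⟨ξ, hξ, ha⟩ := h a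
    exact mem_iUnion.mpr ⟨ToType.mk ⟨ξ, hξ⟩, by simpa using ha⟩
  have hfiber (y : (succ κ).ord.ToType) : #{a | endHomSeq c a y = none} ≤ 2 ^ κ := by
    have hyκ : (y : Ordinal).card ≤ κ := lt_succ_iff.mp (lt_ord.mp y.toOrd.2)
    calc #{a | endHomSeq c a y = none} ≤ 2 ^ (y : Ordinal).card * (y : Ordinal).card :=
          mk_setOf_endHomSeq_eq_none_le _
      _ ≤ 2 ^ κ * 2 ^ κ :=
          mul_le_mul' (power_le_power_left two_ne_zero hyκ) (hyκ.trans (cantor κ).le)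
      _ = 2 ^ κ := mul_eq_self h2κ
  refine hL.not_ge ?_
  calc #L = #(univ : Set L) := mk_univ.symm
    _ ≤ #(succ κ).ord.ToType * ⨆ y : (succ κ).ord.ToType, #{a | endHomSeq c a y = none} :=
        (mk_le_mk_of_subset hcover).trans (mk_iUnion_le _)
    _ ≤ 2 ^ κ * 2 ^ κ := by
        refine mul_le_mul' ?_ (ciSup_le' hfiber)
        simpa [mk_toType] using succ_le_of_lt (cantor κ)
    _ = 2 ^ κ := mul_eq_self h2κ

theorem exists_homogeneous_of_two_pow_lt_mk (hc : ∀ u v, c u v = c v u) {κ : Cardinal.{u}}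
    (hκ : ℵ₀ ≤ κ) (hL : 2 ^ κ < #L) :
    ∃ (t : Bool) (H : Set L), succ κ ≤ #H ∧ ∀ u ∈ H, ∀ v ∈ H, u ≠ v → c u v = t := by
  obtain ⟨a, ha⟩ := exists_forall_endHomSeq_ne_none hκ hL
  have hsome (y : (succ κ).ord.ToType) : (endHomSeq c a y).isSome :=
    Option.isSome_iff_ne_none.mpr (ha _ y.toOrd.2)
  let s (y : (succ κ).ord.ToType) : L := (endHomSeq c a y).get (hsome y)
  have hs (y : (succ κ).ord.ToType) : endHomSeq c a y = some (s y) := Option.eq_some_of_isSome _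
  have hs_lt {y y'} (h : y < y') : s y ≠ s y' ∧ c (s y) (s y') = c (s y) a :=
    endHomSeq_spec (hs y') (ToType.mk.symm.strictMono h) (hs y)
  have hs_inj : Function.Injective s := by
    intro y y' h
    by_contra hne
    rcases lt_or_gt_of_ne hne with hlt | hlt
    · exact (hs_lt hlt).1 h
    · exact (hs_lt hlt).1 h.symm
  obtain ⟨t, hB⟩ := exists_le_mk_preimage_singleton_of_bool (fun y => c (s y) a)
    (hκ.trans (le_succ κ)) (by simp [mk_toType])
  refine ⟨t, s '' _, (mk_image_eq_of_injOn _ _ hs_inj.injOn).symm ▸ hB, ?_⟩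
  rintro _ ⟨y, hy, rfl⟩ _ ⟨y', hy', rfl⟩ hne
  rcases lt_or_gt_of_ne (hs_inj.ne_iff.mp hne) with hlt | hlt
  · exact (hs_lt hlt).2.trans hy
  · exact (hc _ _).trans ((hs_lt hlt).2.trans hy')

end ErdosRado

section Sierpinski

variable {L X : Type*} [LinearOrder L] [LinearOrder X]

def sierpinskiColoring (g : L → X) (u v : L) : Bool :=
  decide (u < v ↔ g u < g v)

theorem sierpinskiColoring_comm {g : L → X} (hg : Function.Injective g) (u v : L) :
    sierpinskiColoring g u v = sierpinskiColoring g v u := by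
  rcases eq_or_ne u v with rfl | huv
  · rfl
  have hg' : g u ≠ g v := hg.ne huv
  simp only [sierpinskiColoring, decide_eq_decide]
  rcases huv.lt_or_gt with h | h <;> rcases hg'.lt_or_gt with h' | h' <;>
    simp [h, h', h.not_gt, h'.not_gt]

theorem strictMonoOn_of_sierpinskiColoring_eq_true {g : L → X} {H : Set L}
    (hH : ∀ u ∈ H, ∀ v ∈ H, u ≠ v → sierpinskiColoring g u v = true) : StrictMonoOn g H :=
  fun u hu v hv huv => (of_decide_eq_true (hH u hu v hv huv.ne)).mp huv

theorem strictAntiOn_of_sierpinskiColoring_eq_false {g : L → X} (hg : Function.Injective g)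
    {H : Set L} (hH : ∀ u ∈ H, ∀ v ∈ H, u ≠ v → sierpinskiColoring g u v = false) :
    StrictAntiOn g H := by
  intro u hu v hv huv
  have hcol := of_decide_eq_false (hH u hu v hv huv.ne)
  exact ((hg.ne huv.ne).symm.lt_or_gt).resolve_right fun h => hcol (iff_of_true huv h)

end Sierpinski

open ErdosRado in
/-- Urysohn's theorem: a linear order of cardinality `> 2 ^ ℵ_α` contains a
subset of order type `ω_{α+1}` or of reverse order type `ω_{α+1}`. -/
theorem stmt8 (α : Ordinal.{u}) (X : Type u) [LinearOrder X]
    (hX : 2 ^ Cardinal.aleph α < #X) :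
    (∃ f : (Cardinal.aleph (α + 1)).ord.ToType → X, StrictMono f) ∨
    (∃ f : (Cardinal.aleph (α + 1)).ord.ToType → X, StrictAnti f) := by
  set κ := ℵ_ α
  let L := (succ ((2 : Cardinal) ^ κ)).ord.ToType
  have hL : #L = succ (2 ^ κ) := by simp [L, mk_toType]
  obtain ⟨g⟩ : Nonempty (L ↪ X) := le_def _ _ |>.mp (hL ▸ succ_le_of_lt hX)
  obtain ⟨t, H, hH, hhom⟩ := exists_homogeneous_of_two_pow_lt_mk
    (sierpinskiColoring_comm g.injective) (aleph0_le_aleph α) (hL ▸ lt_succ _)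
  obtain ⟨e⟩ := nonempty_ord_toType_orderEmbedding (succ_aleph α ▸ hH)
  cases t
  · exact .inr ⟨fun d => g (e d), fun d d' h =>
      strictAntiOn_of_sierpinskiColoring_eq_false g.injective hhom (e d).2 (e d').2
        (e.strictMono h)⟩
  · exact .inl ⟨fun d => g (e d), fun d d' h =>
      strictMonoOn_of_sierpinskiColoring_eq_true hhom (e d).2 (e d').2 (e.strictMono h)⟩
end

section
/- Let λ be a regular cardinal and X a linear order of cardinality λ. Define a ≈ b iff the closed interval between a and b has cardinality < λ. Suppose every subset Y ⊆ X of cardinality λ contains an element y splitting Y into two pieces of cardinality λ. Then ≈ is an equivalence relation on X, each equivalence class has cardinality < λ, and the quotient X/≈ has cardinality λ. -/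
open Cardinal Set

universe u

/-- The equivalence relation used in the proof of Theorem 3.2: `a ≈ b` iff the
closed interval between `a` and `b` has cardinality `< l`. Under the splitting
hypothesis it is an equivalence relation with small classes and a quotient of
cardinality `l`. -/
theorem stmt10 (l : Cardinal.{u}) (hl : l.IsRegular) (X : Type u)
    [LinearOrder X] (hX : #X = l)
    (hsplit : ∀ Y : Set X, #Y = l →
      ∃ y ∈ Y, #{z ∈ Y | z < y} = l ∧ #{z ∈ Y | y < z} = l)
    (r : X → X → Prop)
    (hr : ∀ a b, r a b ↔ (a ≤ b ∧ #{x : X | a ≤ x ∧ x ≤ b} < l) ∨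
      (b ≤ a ∧ #{x : X | b ≤ x ∧ x ≤ a} < l)) :
    Equivalence r ∧ (∀ a : X, #{b : X | r a b} < l) ∧ #(Quot r) = l := by
  have hinf : ℵ₀ ≤ l := hl.aleph0_le
  -- reformulation with min/max
  have hr' : ∀ a b : X, r a b ↔ #{x : X | min a b ≤ x ∧ x ≤ max a b} < l := by
    have key : ∀ a b : X, a ≤ b → (r a b ↔ #{x : X | a ≤ x ∧ x ≤ b} < l) := by
      intro a b hab
      rw [hr]
      constructor
      · rintro (⟨_, h'⟩ | ⟨h2, h'⟩)
        · exact h'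
        · have : a = b := le_antisymm hab h2
          subst this; exact h'
      · exact fun h' => Or.inl ⟨hab, h'⟩
    intro a b
    rcases le_total a b with h | h
    · rw [min_eq_left h, max_eq_right h]; exact key a b h
    · rw [min_eq_right h, max_eq_left h, hr]
      constructor
      · rintro (⟨h2, h'⟩ | ⟨_, h'⟩)
        · have : b = a := le_antisymm h h2
          subst this; exact h'
        · exact h'
      · exact fun h' => Or.inr ⟨h, h'⟩
  -- equivalence
  have hrefl : ∀ a : X, r a a := by
    intro a
    rw [hr' a a, min_self, max_self]
    have hs : {x : X | a ≤ x ∧ x ≤ a} = {a} := by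
      ext x; simp [le_antisymm_iff, and_comm]
    rw [hs, mk_singleton]
    exact one_lt_aleph0.trans_le hinf
  have hsymm : ∀ {a b : X}, r a b → r b a := by
    intro a b h
    rw [hr'] at h ⊢
    rwa [min_comm, max_comm]
  have htrans : ∀ {a b c : X}, r a b → r b c → r a c := by
    intro a b c hab hbc
    rw [hr'] at hab hbc ⊢
    have hsub : {x : X | min a c ≤ x ∧ x ≤ max a c} ⊆
        {x : X | min a b ≤ x ∧ x ≤ max a b} ∪ {x : X | min b c ≤ x ∧ x ≤ max b c} := by
      rintro x ⟨h1, h2⟩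
      rcases le_total x b with hxb | hbx
      · have hm : min (min a b) (min b c) ≤ x :=
          le_trans (le_min ((min_le_left _ _).trans (min_le_left a b))
            ((min_le_right _ _).trans (min_le_right b c))) h1
        rcases min_le_iff.mp hm with h | h
        · exact Or.inl ⟨h, hxb.trans (le_max_right a b)⟩
        · exact Or.inr ⟨h, hxb.trans (le_max_left b c)⟩
      · have hm : x ≤ max (max a b) (max b c) :=
          h2.trans (max_le ((le_max_left a b).trans (le_max_left _ _))
            ((le_max_right b c).trans (le_max_right _ _)))
        rcases le_max_iff.mp hm with h | h
        · exact Or.inl ⟨(min_le_right a b).trans hbx, h⟩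
        · exact Or.inr ⟨(min_le_left b c).trans hbx, h⟩
    calc #{x : X | min a c ≤ x ∧ x ≤ max a c}
        ≤ #({x : X | min a b ≤ x ∧ x ≤ max a b} ∪ {x : X | min b c ≤ x ∧ x ≤ max b c} : Set X) :=
          mk_le_mk_of_subset hsub
      _ ≤ #{x : X | min a b ≤ x ∧ x ≤ max a b} + #{x : X | min b c ≤ x ∧ x ≤ max b c} :=
          mk_union_le _ _
      _ < l := Cardinal.add_lt_of_lt hinf hab hbc
  have hequiv : Equivalence r := ⟨hrefl, hsymm, htrans⟩
  -- small classes
  have hclass : ∀ a : X, #{b : X | r a b} < l := by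
    intro a
    have hU : #{b : X | a ≤ b ∧ r a b} < l := by
      by_contra hc
      push_neg at hc
      have heq : #{b : X | a ≤ b ∧ r a b} = l :=
        le_antisymm ((Cardinal.mk_set_le _).trans hX.le) hc
      obtain ⟨y, hy, hlt, -⟩ := hsplit _ heq
      have hsub : {z ∈ {b : X | a ≤ b ∧ r a b} | z < y} ⊆
          {x : X | min a y ≤ x ∧ x ≤ max a y} := by
        rintro z ⟨⟨haz, -⟩, hzy⟩
        exact ⟨(min_le_left a y).trans haz, hzy.le.trans (le_max_right a y)⟩
      have hsmall : #{z ∈ {b : X | a ≤ b ∧ r a b} | z < y} < l :=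
        (mk_le_mk_of_subset hsub).trans_lt ((hr' a y).mp hy.2)
      rw [hlt] at hsmall
      exact lt_irrefl l hsmall
    have hL : #{b : X | b ≤ a ∧ r a b} < l := by
      by_contra hc
      push_neg at hc
      have heq : #{b : X | b ≤ a ∧ r a b} = l :=
        le_antisymm ((Cardinal.mk_set_le _).trans hX.le) hc
      obtain ⟨y, hy, -, hlt⟩ := hsplit _ heq
      have hsub : {z ∈ {b : X | b ≤ a ∧ r a b} | y < z} ⊆
          {x : X | min a y ≤ x ∧ x ≤ max a y} := by
        rintro z ⟨⟨hza, -⟩, hyz⟩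
        exact ⟨(min_le_right a y).trans hyz.le, hza.trans (le_max_left a y)⟩
      have hsmall : #{z ∈ {b : X | b ≤ a ∧ r a b} | y < z} < l :=
        (mk_le_mk_of_subset hsub).trans_lt ((hr' a y).mp hy.2)
      rw [hlt] at hsmall
      exact lt_irrefl l hsmall
    have hsub : {b : X | r a b} ⊆
        {b : X | a ≤ b ∧ r a b} ∪ {b : X | b ≤ a ∧ r a b} := by
      intro b hb
      rcases le_total a b with h | h
      · exact Or.inl ⟨h, hb⟩
      · exact Or.inr ⟨h, hb⟩
    calc #{b : X | r a b}
        ≤ #({b : X | a ≤ b ∧ r a b} ∪ {b : X | b ≤ a ∧ r a b} : Set X) :=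
          mk_le_mk_of_subset hsub
      _ ≤ #{b : X | a ≤ b ∧ r a b} + #{b : X | b ≤ a ∧ r a b} := mk_union_le _ _
      _ < l := Cardinal.add_lt_of_lt hinf hU hL
  refine ⟨hequiv, hclass, ?_⟩
  -- quotient cardinality
  refine le_antisymm (mk_quot_le.trans hX.le) ?_
  by_contra hq
  push_neg at hq
  have hfib : ∀ q : Quot r, #{x : X // Quot.mk r x = q} < l := by
    refine Quot.ind fun a => ?_
    have hs : {x : X | Quot.mk r x = Quot.mk r a} = {b : X | r a b} := by
      ext x
      rw [mem_setOf_eq, mem_setOf_eq, Quot.eq, hequiv.eqvGen_iff]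
      exact ⟨fun h => hsymm h, fun h => hsymm h⟩
    calc #{x : X // Quot.mk r x = Quot.mk r a} = #{b : X | r a b} := by rw [← hs]; rfl
      _ < l := hclass a
  have hX' : #X < l := by
    have e : X ≃ Σ q : Quot r, {x : X // Quot.mk r x = q} :=
      (Equiv.sigmaFiberEquiv (Quot.mk r)).symm
    rw [Cardinal.mk_congr e, Cardinal.mk_sigma]
    exact Cardinal.sum_lt_of_isRegular hl hq hfib
  rw [hX] at hX'
  exact lt_irrefl l hX'
end

section
/- (Alexandroff–Urysohn) Let λ be a regular cardinal. A topological space X is [λ, λ]-compact if and only if every subset A ⊆ X with |A| = λ has a complete accumulation point, i.e., a point x such that every open neighborhood U of x satisfies |U ∩ A| = |A|. -/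
/-!
For regular `l`, `[l, l]`-compactness is equivalent to: every increasing open cover
`(V i)_{i < l}` has a member equal to the whole space, since a subcover of size `< l` only uses
a bounded set of indices.

If `A = {a i | i < l}` has no complete accumulation point, every point has a neighbourhood `U`
meeting `A` in a bounded set of indices; letting `V i` be the union of those `U` bounded by `i`
gives an increasing cover with `a i ∉ V i`. Conversely, from an increasing cover with no member
equal to the space pick `a i ∉ V i`; then `V j` contains `a i` only for `i < j`, so
`{a i | i < l}` has `l` points and no complete accumulation point.
-/

open Cardinal Set

universe u

/-- `X` is `[l, l]`-compact: every open cover of cardinality `≤ l` has a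
subcover of cardinality `< l`. -/
def CompactCC (l : Cardinal.{u}) (X : Type u) [TopologicalSpace X] : Prop :=
  ∀ 𝒰 : Set (Set X), (∀ U ∈ 𝒰, IsOpen U) → ⋃₀ 𝒰 = Set.univ → #𝒰 ≤ l →
    ∃ 𝒱 ⊆ 𝒰, ⋃₀ 𝒱 = Set.univ ∧ #𝒱 < l

theorem Ordinal.exists_forall_lt_of_mk_lt_cof {o : Ordinal.{u}} {s : Set o.ToType}
    (hs : #s < o.cof) : ∃ m, ∀ i ∈ s, i < m := by
  have hs' : ¬ IsCofinal s := fun h ↦ (Order.cof_le h).not_gt (by rwa [Ordinal.cof_toType])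
  simpa [IsCofinal] using hs'

def IncreasingCoverCompact (l : Cardinal.{u}) (X : Type u) [TopologicalSpace X] : Prop :=
  ∀ V : l.ord.ToType → Set X, (∀ i, IsOpen (V i)) → Monotone V → ⋃ i, V i = Set.univ →
    ∃ i, V i = Set.univ

def IsCompleteAccPt {X : Type u} [TopologicalSpace X] (x : X) (A : Set X) : Prop :=
  ∀ U : Set X, IsOpen U → x ∈ U → #(U ∩ A : Set X) = #A

section

variable {l : Cardinal.{u}} {X : Type u} [TopologicalSpace X]

theorem CompactCC.increasingCoverCompact (hl : l.IsRegular) (hX : CompactCC l X) :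
    IncreasingCoverCompact l X := by
  intro V hVo hVmono hVcov
  obtain ⟨𝒱, h𝒱V, h𝒱cov, h𝒱lt⟩ := hX (range V) (forall_mem_range.2 hVo)
    (by rwa [sUnion_range]) (mk_range_le.trans_eq (mk_ord_toType l))
  choose g hg using fun W : 𝒱 ↦ h𝒱V W.2
  obtain ⟨m, hm⟩ := Ordinal.exists_forall_lt_of_mk_lt_cof (s := range g)
    (by rw [hl.cof_ord]; exact mk_range_le.trans_lt h𝒱lt)
  refine ⟨m, eq_univ_of_univ_subset (h𝒱cov ▸ sUnion_subset fun W hW ↦ ?_)⟩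
  have hWV : V (g ⟨W, hW⟩) = W := hg ⟨W, hW⟩
  exact hWV ▸ hVmono (hm _ (mem_range_self _)).le

theorem IncreasingCoverCompact.compactCC (hl : l.IsRegular) (hX : IncreasingCoverCompact l X) :
    CompactCC l X := by
  intro 𝒰 h𝒰o h𝒰cov h𝒰l
  rcases h𝒰l.lt_or_eq with h𝒰lt | h𝒰eq
  · exact ⟨𝒰, subset_rfl, h𝒰cov, h𝒰lt⟩
  obtain ⟨f⟩ : Nonempty (l.ord.ToType ≃ 𝒰) :=
    Cardinal.eq.mp ((mk_ord_toType l).trans h𝒰eq.symm)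
  have := Cardinal.noMaxOrder hl.aleph0_le
  let 𝒱 : l.ord.ToType → Set (Set X) := fun m ↦ (fun i ↦ (f i : Set X)) '' Iio m
  have h𝒱𝒰 : ∀ m, 𝒱 m ⊆ 𝒰 := fun m ↦ image_subset_iff.2 fun i _ ↦ (f i).2
  have hcov : ⋃ m, ⋃₀ 𝒱 m = Set.univ := by
    refine eq_univ_of_forall fun x ↦ ?_
    obtain ⟨U, hU, hxU⟩ := mem_sUnion.1 (h𝒰cov ▸ mem_univ x)
    obtain ⟨m, hm⟩ := exists_gt (f.symm ⟨U, hU⟩)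
    exact mem_iUnion.2 ⟨m, U, ⟨f.symm ⟨U, hU⟩, hm, by simp⟩, hxU⟩
  obtain ⟨m, hm⟩ := hX (fun m ↦ ⋃₀ 𝒱 m)
    (fun m ↦ isOpen_sUnion fun U hU ↦ h𝒰o U (h𝒱𝒰 m hU))
    (fun _ _ h ↦ sUnion_mono (image_mono (Iio_subset_Iio h))) hcov
  exact ⟨𝒱 m, h𝒱𝒰 m, hm,
    mk_image_le.trans_lt ((mk_Iio_lt m (by simp)).trans_eq (mk_ord_toType l))⟩

theorem compactCC_iff_increasingCoverCompact (hl : l.IsRegular) :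
    CompactCC l X ↔ IncreasingCoverCompact l X :=
  ⟨CompactCC.increasingCoverCompact hl, IncreasingCoverCompact.compactCC hl⟩

theorem IncreasingCoverCompact.exists_isCompleteAccPt (hl : l.IsRegular)
    (hX : IncreasingCoverCompact l X) {A : Set X} (hA : #A = l) : ∃ x, IsCompleteAccPt x A := by
  by_contra! h
  simp only [IsCompleteAccPt, not_forall] at h
  choose U hUo hxU hUA using h
  obtain ⟨e⟩ : Nonempty (l.ord.ToType ≃ A) := Cardinal.eq.mp ((mk_ord_toType l).trans hA.symm)
  have hbound : ∀ x, ∃ m, ∀ i ∈ (fun i ↦ (e i : X)) ⁻¹' (U x ∩ A), i < m := by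
    intro x
    refine Ordinal.exists_forall_lt_of_mk_lt_cof ?_
    rw [hl.cof_ord]
    exact (mk_preimage_of_injective _ _ (Subtype.val_injective.comp e.injective)).trans_lt
      (hA ▸ (mk_le_mk_of_subset inter_subset_right).lt_of_ne (hUA x))
  choose b hb using hbound
  obtain ⟨m, hm⟩ := hX (fun m ↦ ⋃ x ∈ {x | b x ≤ m}, U x)
    (fun m ↦ isOpen_biUnion fun x _ ↦ hUo x)
    (fun _ _ h ↦ biUnion_mono (fun _ hx ↦ le_trans hx h) fun _ _ ↦ subset_rfl)
    (eq_univ_of_forall fun x ↦ mem_iUnion.2 ⟨b x, mem_biUnion (le_refl (b x)) (hxU x)⟩)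
  obtain ⟨x, hxm, hx⟩ := mem_iUnion₂.1 (hm ▸ mem_univ (e m : X))
  exact (hb x m ⟨hx, (e m).2⟩).not_ge hxm

theorem increasingCoverCompact_of_forall_exists_isCompleteAccPt (hl : l.IsRegular)
    (hX : ∀ A : Set X, #A = l → ∃ x, IsCompleteAccPt x A) : IncreasingCoverCompact l X := by
  intro V hVo hVmono hVcov
  by_contra! hV
  choose a ha using fun m ↦ (ne_univ_iff_exists_notMem (V m)).1 (hV m)
  have hlt : ∀ {m c}, a m ∈ V c → m < c :=
    fun h ↦ lt_of_not_ge fun hcm ↦ ha _ (hVmono hcm h)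
  choose c hc using fun x ↦ mem_iUnion.1 (hVcov ▸ mem_univ x)
  have hsmall : ∀ x, #(V (c x) ∩ range a : Set X) < l := fun x ↦ by
    have hsub : V (c x) ∩ range a ⊆ a '' Iio (c x) := by
      rintro _ ⟨hy, m, rfl⟩
      exact ⟨m, hlt hy, rfl⟩
    exact (mk_le_mk_of_subset hsub).trans_lt (mk_image_le.trans_lt
      ((mk_Iio_lt _ (by simp)).trans_eq (mk_ord_toType l)))
  -- if `#(range a) < l`, the stages `c z` of its points are bounded by some `m`, but `a m ∈ V j`
  -- forces `m < j`
  have hAl : #(range a) = l := by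
    refine (mk_range_le.trans_eq (mk_ord_toType l)).antisymm (not_lt.1 fun hA ↦ ?_)
    obtain ⟨m, hm⟩ := Ordinal.exists_forall_lt_of_mk_lt_cof (s := c '' range a)
      (by rw [hl.cof_ord]; exact mk_image_le.trans_lt hA)
    exact (hlt (hc (a m))).asymm (hm _ (mem_image_of_mem c (mem_range_self m)))
  obtain ⟨x, hx⟩ := hX (range a) hAl
  exact (hsmall x).ne ((hx _ (hVo _) (hc x)).trans hAl)

end

/-- Alexandroff–Urysohn: for regular `l`, a space is `[l, l]`-compact iff every
subset of cardinality `l` has a complete accumulation point. -/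
theorem stmt13 (l : Cardinal.{u}) (hl : l.IsRegular) (X : Type u)
    [TopologicalSpace X] :
    CompactCC l X ↔
      ∀ A : Set X, #A = l →
        ∃ x : X, ∀ U : Set X, IsOpen U → x ∈ U → #(U ∩ A : Set X) = #A := by
  rw [compactCC_iff_increasingCoverCompact hl]
  exact ⟨fun hX _ hA ↦ hX.exists_isCompleteAccPt hl hA,
    increasingCoverCompact_of_forall_exists_isCompleteAccPt hl⟩
end

section
/- Let λ be a regular cardinal and X a linearly ordered topological space (with the order topology). If X is [λ, λ]-compact, then X has no gap of type λ. -/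
open Cardinal Set

universe u

/-- `(A, B)` is a gap of the linearly ordered topological space `X`. -/
def IsGap {X : Type u} [LinearOrder X] [TopologicalSpace X] (A B : Set X) : Prop :=
  IsOpen A ∧ IsOpen B ∧ A ∪ B = Set.univ ∧ A.Nonempty ∧ B.Nonempty ∧
  (∀ a ∈ A, ∀ b ∈ B, a < b) ∧
  (∀ a ∈ A, ∃ a' ∈ A, a < a') ∧ (∀ b ∈ B, ∃ b' ∈ B, b' < b)

/-- The cofinality of a subset `A` of a linear order: the least cardinality of
a subset of `A` cofinal in `A`. -/
noncomputable def setCof {X : Type u} [LinearOrder X] (A : Set X) : Cardinal :=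
  sInf {c | ∃ S ⊆ A, (∀ a ∈ A, ∃ s ∈ S, a ≤ s) ∧ #S = c}

/-- The coinitiality of a subset `B` of a linear order: the least cardinality
of a subset of `B` coinitial in `B`. -/
noncomputable def setCoi {X : Type u} [LinearOrder X] (B : Set X) : Cardinal :=
  sInf {c | ∃ S ⊆ B, (∀ b ∈ B, ∃ s ∈ S, s ≤ b) ∧ #S = c}

/-- `k` is a type of the gap `(A, B)`. -/
def GapHasType {X : Type u} [LinearOrder X] (A B : Set X) (k : Cardinal) : Prop :=
  setCof A = k ∨ setCoi B = k

theorem CompactCC.dual {X : Type u} [TopologicalSpace X] {l : Cardinal.{u}}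
    (hc : CompactCC l X) : CompactCC l Xᵒᵈ :=
  hc

section LinearOrder

variable {X : Type u} [LinearOrder X]

theorem exists_subset_cofinal_mk_eq_setCof (A : Set X) :
    ∃ S ⊆ A, (∀ a ∈ A, ∃ s ∈ S, a ≤ s) ∧ #S = setCof A :=
  csInf_mem (s := {c | ∃ S ⊆ A, (∀ a ∈ A, ∃ s ∈ S, a ≤ s) ∧ #S = c})
    ⟨#A, A, subset_rfl, fun a ha => ⟨a, ha, le_rfl⟩, rfl⟩

theorem setCof_le_mk {A S : Set X} (hSA : S ⊆ A) (hS : ∀ a ∈ A, ∃ s ∈ S, a ≤ s) :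
    setCof A ≤ #S :=
  csInf_le' ⟨S, hSA, hS, rfl⟩

theorem setCof_ofDual_preimage (A : Set X) :
    setCof (OrderDual.ofDual ⁻¹' A) = setCoi A :=
  rfl

variable [TopologicalSpace X]

theorem IsGap.dual {A B : Set X} (hg : IsGap A B) :
    IsGap (OrderDual.ofDual ⁻¹' B) (OrderDual.ofDual ⁻¹' A) := by
  obtain ⟨hAo, hBo, hAB, hAne, hBne, hlt, hAnm, hBnm⟩ := hg
  exact ⟨hBo, hAo, (union_comm B A).trans hAB, hBne, hAne,
    fun b hb a ha => hlt a ha b hb, hBnm, hAnm⟩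

/-- The left half `A` of a gap is covered by the rays `(-∞, s)`, `s ∈ S`, and the open set `B`
covers the rest; a small subcover leaves a small cofinal part of `S`. -/
theorem IsGap.exists_subset_cofinal_mk_lt [OrderTopology X] {l : Cardinal.{u}} (hl : ℵ₀ ≤ l)
    (hc : CompactCC l X) {A B : Set X} (hg : IsGap A B) {S : Set X}
    (hS : ∀ a ∈ A, ∃ s ∈ S, a ≤ s) (hSl : #S ≤ l) :
    ∃ T ⊆ S, (∀ a ∈ A, ∃ t ∈ T, a ≤ t) ∧ #T < l := by
  obtain ⟨-, hBo, hAB, -, -, hlt, hAnm, -⟩ := hg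
  set 𝒰 : Set (Set X) := insert B (Iio '' S)
  have hopen : ∀ U ∈ 𝒰, IsOpen U := by
    rintro U (rfl | ⟨s, -, rfl⟩)
    exacts [hBo, isOpen_Iio]
  have hcover : ⋃₀ 𝒰 = Set.univ := by
    refine eq_univ_of_forall fun x => ?_
    rcases (hAB ▸ mem_univ x : x ∈ A ∪ B) with hxA | hxB
    · obtain ⟨a, haA, hxa⟩ := hAnm x hxA
      obtain ⟨s, hsS, has⟩ := hS a haA
      exact ⟨Iio s, Or.inr ⟨s, hsS, rfl⟩, hxa.trans_le has⟩
    · exact ⟨B, Or.inl rfl, hxB⟩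
  have hcard : #𝒰 ≤ l :=
    calc #𝒰 ≤ #(Iio '' S) + 1 := mk_insert_le
      _ ≤ l + 1 := by gcongr; exact mk_image_le.trans hSl
      _ = l := add_one_eq hl
  obtain ⟨𝒱, h𝒱𝒰, h𝒱cover, h𝒱l⟩ := hc 𝒰 hopen hcover hcard
  refine ⟨S ∩ Iio ⁻¹' 𝒱, inter_subset_left, fun a haA => ?_, ?_⟩
  · obtain ⟨V, hV𝒱, haV⟩ := h𝒱cover ▸ mem_univ a
    rcases h𝒱𝒰 hV𝒱 with rfl | ⟨s, hsS, rfl⟩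
    · exact absurd (hlt a haA a haV) (lt_irrefl a)
    · exact ⟨s, ⟨hsS, hV𝒱⟩, le_of_lt haV⟩
  · exact (mk_le_mk_of_subset inter_subset_right).trans_lt
      ((mk_preimage_of_injective _ _ Iio_injective).trans_lt h𝒱l)

theorem IsGap.setCof_ne [OrderTopology X] {l : Cardinal.{u}} (hl : ℵ₀ ≤ l) (hc : CompactCC l X)
    {A B : Set X} (hg : IsGap A B) : setCof A ≠ l := by
  intro hAl
  obtain ⟨S, hSA, hS, hSl⟩ := exists_subset_cofinal_mk_eq_setCof A
  obtain ⟨T, hTS, hT, hTl⟩ := hg.exists_subset_cofinal_mk_lt hl hc hS (hSl.trans hAl).le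
  exact (setCof_le_mk (hTS.trans hSA) hT).not_gt (hAl ▸ hTl)

end LinearOrder

/-- Remark 1.7: a `[l, l]`-compact LOTS has no gap of type `l` (`l` regular). -/
theorem stmt14 (l : Cardinal.{u}) (hl : l.IsRegular) (X : Type u)
    [LinearOrder X] [TopologicalSpace X] [OrderTopology X]
    (hc : CompactCC l X) :
    ¬ ∃ A B : Set X, IsGap A B ∧ GapHasType A B l := by
  rintro ⟨A, B, hg, hA | hB⟩
  · exact hg.setCof_ne hl.aleph0_le hc hA
  · exact hg.dual.setCof_ne hl.aleph0_le hc.dual ((setCof_ofDual_preimage B).trans hB)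
end

section
/- Let μ be a weakly compact cardinal and X a linearly ordered set of regular cardinality λ ≥ μ. Then X contains a λ-full subset of order type μ (or reverse order type μ), or a subset of order type λ (or reverse order type λ). -/
open Cardinal Set

universe u

/-- Order-theoretic characterization of weak compactness: `m` is uncountable
and every linear order of cardinality `m` has a subset of order type `m` or of
reverse order type `m`. -/
def IsWeaklyCompact (m : Cardinal.{u}) : Prop :=
  Cardinal.aleph0 < m ∧ ∀ (X : Type u) [LinearOrder X], #X = m →
    (∃ f : m.ord.ToType → X, StrictMono f) ∨ (∃ f : m.ord.ToType → X, StrictAnti f)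

/-!
Call `c` close to `t` when fewer than `l` points lie strictly between them. If some `t` has `l`
close points, then `l` of them lie on one side of `t`, say to the right; each of these has fewer
than `l` of the others below it, so a transfinite greedy choice, which never gets stuck because
`l` is regular, produces a strictly increasing `l`-sequence. Otherwise every point has fewer than
`l` close points, and the same greedy choice produces `l` points pairwise far apart. Weak
compactness applied to `μ` of them gives a monotone `μ`-sequence in which consecutive terms are
separated by `l` points, so its range is `l`-full.
-/

section Greedy

variable {X ι : Type u} [Preorder ι] [WellFoundedLT ι]

noncomputable def greedySeq [Nonempty X] (S : Set X) (B : X → Set X) : ι → X :=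
  wellFounded_lt.fix fun i rec =>
    Classical.epsilon fun x => x ∈ S ∧ ∀ j (hj : j < i), x ∉ B (rec j hj)

theorem exists_seq_forall_lt_notMem {l : Cardinal.{u}} (hl : l.IsRegular)
    (hι : ∀ i : ι, #(Iio i) < l) {S : Set X} (hS : l ≤ #S) {B : X → Set X}
    (hB : ∀ y ∈ S, #(B y) < l) :
    ∃ f : ι → X, (∀ i, f i ∈ S) ∧ ∀ ⦃i j⦄, i < j → f j ∉ B (f i) := by
  obtain ⟨x₀, -⟩ : S.Nonempty := nonempty_iff_ne_empty.2 fun h => by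
    simp [h, hl.pos.not_ge] at hS
  have : Nonempty X := ⟨x₀⟩
  let f : ι → X := greedySeq S B
  suffices key : ∀ j, f j ∈ S ∧ ∀ i, i < j → f j ∉ B (f i) from
    ⟨f, fun j => (key j).1, fun i j hij => (key j).2 i hij⟩
  intro j
  induction j using WellFoundedLT.induction with
  | _ j ih =>
    have hsmall : #(⋃ i : Iio j, B (f i)) < l :=
      (card_iUnion_lt_iff_forall_of_isRegular hl (hι j)).2 fun i => hB _ (ih i i.2).1
    obtain ⟨x, hxS, hxB⟩ : (S \ ⋃ i : Iio j, B (f i)).Nonempty :=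
      sdiff_nonempty.2 fun hsub => (hS.trans (mk_le_mk_of_subset hsub)).not_gt hsmall
    rw [show f j = _ from wellFounded_lt.fix_eq _ j]
    exact Classical.epsilon_spec (p := fun x => x ∈ S ∧ ∀ i, i < j → x ∉ B (f i))
      ⟨x, hxS, fun i hi hxi => hxB (mem_iUnion.2 ⟨⟨i, hi⟩, hxi⟩)⟩

end Greedy

theorem mk_insert_lt {α : Type u} {l : Cardinal.{u}} (hl : ℵ₀ ≤ l) {s : Set α} (hs : #s < l)
    (a : α) : #(insert a s : Set α) < l :=
  mk_insert_le.trans_lt (add_lt_of_lt hl hs (one_lt_aleph0.trans_le hl))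

section Intervals

variable {X : Type u} [LinearOrder X] {l : Cardinal.{u}}

theorem exists_strictMono_of_mk_inter_Iic_lt (hl : l.IsRegular) {S : Set X} (hS : l ≤ #S)
    (hS' : ∀ y ∈ S, #(S ∩ Iic y : Set X) < l) : ∃ f : l.ord.ToType → X, StrictMono f := by
  obtain ⟨f, hfS, hf⟩ := exists_seq_forall_lt_notMem (ι := l.ord.ToType) hl
    (fun i => by simpa using mk_Iio_lt i) hS hS'
  exact ⟨f, fun i j hij => lt_of_not_ge fun hji => hf hij ⟨hfS j, hji⟩⟩

theorem exists_strictAnti_of_mk_inter_Ici_lt (hl : l.IsRegular) {S : Set X} (hS : l ≤ #S)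
    (hS' : ∀ y ∈ S, #(S ∩ Ici y : Set X) < l) : ∃ f : l.ord.ToType → X, StrictAnti f :=
  exists_strictMono_of_mk_inter_Iic_lt (X := Xᵒᵈ) hl hS hS'

theorem le_mk_inter_Iio_or_le_mk_inter_Ioi (hl : ℵ₀ ≤ l) {s : Set X} (hs : l ≤ #s) (t : X) :
    l ≤ #(s ∩ Iio t : Set X) ∨ l ≤ #(s ∩ Ioi t : Set X) := by
  by_contra! h
  have hsub : s ⊆ insert t (s ∩ Iio t ∪ s ∩ Ioi t) := fun x hx => by
    rcases lt_trichotomy x t with hxt | rfl | hxt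
    exacts [Or.inr (Or.inl ⟨hx, hxt⟩), Or.inl rfl, Or.inr (Or.inr ⟨hx, hxt⟩)]
  exact hs.not_gt <| (mk_le_mk_of_subset hsub).trans_lt <|
    mk_insert_lt hl ((mk_union_le _ _).trans_lt (add_lt_of_lt hl h.1 h.2)) t

theorem mk_Ioc_lt_of_mk_uIoo_lt (hl : ℵ₀ ≤ l) {a b : X} (h : #(uIoo a b) < l) :
    #(Ioc a b) < l := by
  refine (mk_le_mk_of_subset fun x hx => ?_).trans_lt (mk_insert_lt hl h b)
  rcases hx.2.lt_or_eq with hxb | rfl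
  exacts [Or.inr (mem_uIoo_of_lt hx.1 hxb), Or.inl rfl]

theorem mk_Ico_lt_of_mk_uIoo_lt (hl : ℵ₀ ≤ l) {a b : X} (h : #(uIoo a b) < l) :
    #(Ico a b) < l := by
  refine (mk_le_mk_of_subset fun x hx => ?_).trans_lt (mk_insert_lt hl h a)
  rcases hx.1.lt_or_eq with hax | rfl
  exacts [Or.inr (mem_uIoo_of_lt hax hx.2), Or.inl rfl]

theorem exists_strictMono_or_strictAnti_of_le_mk_setOf_uIoo_lt (hl : l.IsRegular) {t : X}
    (ht : l ≤ #{c | #(uIoo t c) < l}) :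
    ∃ f : l.ord.ToType → X, StrictMono f ∨ StrictAnti f := by
  rcases le_mk_inter_Iio_or_le_mk_inter_Ioi hl.aleph0_le ht t with h | h
  · obtain ⟨f, hf⟩ := exists_strictAnti_of_mk_inter_Ici_lt hl h fun y hy =>
      (mk_le_mk_of_subset (t := Ico y t) fun x hx => ⟨hx.2, hx.1.2⟩).trans_lt <|
        mk_Ico_lt_of_mk_uIoo_lt hl.aleph0_le (by rw [uIoo_comm]; exact hy.1)
    exact ⟨f, Or.inr hf⟩
  · obtain ⟨f, hf⟩ := exists_strictMono_of_mk_inter_Iic_lt hl h fun y hy =>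
      (mk_le_mk_of_subset (t := Ioc t y) fun x hx => ⟨hx.1.2, hx.2⟩).trans_lt <|
        mk_Ioc_lt_of_mk_uIoo_lt hl.aleph0_le hy.1
    exact ⟨f, Or.inl hf⟩

theorem exists_pairwise_le_mk_uIoo (hl : l.IsRegular) (hX : l ≤ #X)
    (hclose : ∀ t : X, #{c | #(uIoo t c) < l} < l) :
    ∃ T : Set X, #T = l ∧ T.Pairwise fun a b => l ≤ #(uIoo a b) := by
  obtain ⟨f, -, hf⟩ := exists_seq_forall_lt_notMem (ι := l.ord.ToType) hl
    (fun i => by simpa using mk_Iio_lt i) (S := univ) (by rwa [mk_univ])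
    (B := fun t => {c | #(uIoo t c) < l}) fun t _ => hclose t
  have hfar : Pairwise fun i j => l ≤ #(uIoo (f i) (f j)) := fun i j hij => by
    rcases hij.lt_or_gt with hij | hji
    · exact not_lt.1 (hf hij)
    · exact uIoo_comm (f i) (f j) ▸ not_lt.1 (hf hji)
  have hinj : Function.Injective f := fun i j hfij => by
    by_contra hij
    simpa [hfij, uIoo_self, hl.pos.not_ge] using hfar hij
  refine ⟨range f, by simp [mk_range_eq f hinj], ?_⟩
  rintro _ ⟨i, rfl⟩ _ ⟨j, rfl⟩ hne
  exact hfar fun hij => hne (congrArg f hij)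

theorem fullRight_of_forall_exists_gt (hX : #X = l) {Y : Set X}
    (h : ∀ y ∈ Y, ∃ y' ∈ Y, y < y' ∧ l ≤ #(Ioo y y')) : FullRight l Y := by
  intro y hy
  obtain ⟨y', hy', hyy', hl⟩ := h y hy
  exact le_antisymm ((mk_set_le _).trans hX.le)
    (hl.trans (mk_le_mk_of_subset fun x hx => ⟨y', hy', hyy', hx⟩))

theorem fullLeft_of_forall_exists_lt (hX : #X = l) {Y : Set X}
    (h : ∀ y ∈ Y, ∃ y' ∈ Y, y' < y ∧ l ≤ #(Ioo y' y)) : FullLeft l Y := by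
  intro y hy
  obtain ⟨y', hy', hyy', hl⟩ := h y hy
  exact le_antisymm ((mk_set_le _).trans hX.le)
    (hl.trans (mk_le_mk_of_subset fun x hx => ⟨y', hy', hyy', hx⟩))

theorem exists_full_of_pairwise_le_mk_uIoo {μ : Cardinal.{u}} (hμ : IsWeaklyCompact μ)
    (hX : #X = l) {T : Set X} (hT : μ ≤ #T) (hfar : T.Pairwise fun a b => l ≤ #(uIoo a b)) :
    ∃ f : μ.ord.ToType → X,
      (StrictMono f ∧ FullRight l (range f)) ∨ (StrictAnti f ∧ FullLeft l (range f)) := by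
  obtain ⟨S, hST, hS⟩ := le_mk_iff_exists_subset.1 hT
  have : NoMaxOrder μ.ord.ToType := Cardinal.noMaxOrder hμ.1.le
  have hfar' {a b : S} (hab : (a : X) < b) : l ≤ #(Ioo (a : X) b) :=
    uIoo_of_lt hab ▸ hfar (hST a.2) (hST b.2) hab.ne
  rcases hμ.2 S hS with ⟨g, hg⟩ | ⟨g, hg⟩
  · refine ⟨fun i => (g i : X), Or.inl ⟨fun i j hij => hg hij, ?_⟩⟩
    refine fullRight_of_forall_exists_gt hX ?_
    rintro _ ⟨i, rfl⟩
    obtain ⟨j, hij⟩ := exists_gt i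
    exact ⟨g j, ⟨j, rfl⟩, hg hij, hfar' (hg hij)⟩
  · refine ⟨fun i => (g i : X), Or.inr ⟨fun i j hij => hg hij, ?_⟩⟩
    refine fullLeft_of_forall_exists_lt hX ?_
    rintro _ ⟨i, rfl⟩
    obtain ⟨j, hij⟩ := exists_gt i
    exact ⟨g j, ⟨j, rfl⟩, hg hij, hfar' (hg hij)⟩

end Intervals

/-- Theorem 4.6: if `μ` is weakly compact and `X` is a linear order of regular
cardinality `l ≥ μ`, then `X` has an `l`-full subset of (reverse) order type
`μ`, or a subset of (reverse) order type `l`. -/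
theorem stmt17 (μ l : Cardinal.{u}) (hμ : IsWeaklyCompact μ) (hl : l.IsRegular)
    (hμl : μ ≤ l) (X : Type u) [LinearOrder X] (hX : #X = l) :
    (∃ f : μ.ord.ToType → X,
        (StrictMono f ∧ FullRight l (Set.range f)) ∨
        (StrictAnti f ∧ FullLeft l (Set.range f))) ∨
    (∃ f : l.ord.ToType → X, StrictMono f ∨ StrictAnti f) := by
  by_cases h : ∃ t : X, l ≤ #{c | #(uIoo t c) < l}
  · obtain ⟨t, ht⟩ := h
    exact Or.inr (exists_strictMono_or_strictAnti_of_le_mk_setOf_uIoo_lt hl ht)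
  · push Not at h
    obtain ⟨T, hTl, hT⟩ := exists_pairwise_le_mk_uIoo hl hX.ge h
    exact Or.inl (exists_full_of_pairwise_le_mk_uIoo hμ hX (hμl.trans hTl.ge) hT)
end

section
/- Let λ be an infinite regular cardinal and X a linearly ordered set of cardinality λ such that there exists Y ⊆ X with |Y| = λ and for every y ∈ Y exactly one of {z ∈ Y : z < y}, {z ∈ Y : z > y} has cardinality < λ. Then X contains a subset of order type λ or a subset of reverse order type λ. -/
open Cardinal Set

universe u

/-!
Every point of `Y` has a small side in `Y`, so either the points with a small initial segment or
the points with a small final segment form a set of size `λ`. In a set `A` of size `λ` all of whose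
initial segments are small, regularity of `λ` makes every subset of size `< λ` strictly bounded
above in `A`, so a transfinite recursion of length `λ` can pick each term above all earlier ones.
-/

lemma mk_eq_or_mk_eq_of_union_eq {α : Type u} {l : Cardinal.{u}} (hl : ℵ₀ ≤ l)
    {A B s : Set α} (hAB : A ∪ B = s) (hs : #s = l) : #A = l ∨ #B = l := by
  subst hAB
  by_contra! h
  have hA : #A < l := ((mk_le_mk_of_subset subset_union_left).trans_eq hs).lt_of_ne h.1
  have hB : #B < l := ((mk_le_mk_of_subset subset_union_right).trans_eq hs).lt_of_ne h.2
  exact ((mk_union_le A B).trans_lt (add_lt_of_lt hl hA hB)).ne hs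

section

variable {α : Type u} [LinearOrder α] {l : Cardinal.{u}}

lemma mk_Iio_subtype (s : Set α) (a : s) : #(Iio a) = #{z ∈ s | z < (a : α)} :=
  mk_congr (Equiv.subtypeSubtypeEquivSubtypeInter (· ∈ s) (· < (a : α)))

lemma mk_Ioi_subtype (s : Set α) (a : s) : #(Ioi a) = #{z ∈ s | (a : α) < z} :=
  mk_congr (Equiv.subtypeSubtypeEquivSubtypeInter (· ∈ s) ((a : α) < ·))

lemma exists_forall_lt_of_mk_lt (hl : l.IsRegular) (hα : #α = l)
    (hIio : ∀ a : α, #(Iio a) < l) {S : Set α} (hS : #S < l) : ∃ a, ∀ s ∈ S, s < a := by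
  have hIic : #(⋃ s ∈ S, Iic s) < l := by
    refine (card_biUnion_lt_iff_forall_of_isRegular hl hS).2 fun s _ => ?_
    rw [← Iio_insert, mk_insert self_notMem_Iio]
    exact add_one_lt_of_lt hl.aleph0_le (hIio s)
  have : ¬ Set.univ ⊆ ⋃ s ∈ S, Iic s := fun h =>
    ((mk_le_mk_of_subset h).trans_lt hIic).ne (mk_univ.trans hα)
  obtain ⟨a, -, ha⟩ := not_subset.1 this
  exact ⟨a, fun s hs => not_le.1 fun h => ha (mem_biUnion hs h)⟩

lemma exists_strictMono_of_mk_Iio_lt (hl : l.IsRegular) (hα : #α = l)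
    (hIio : ∀ a : α, #(Iio a) < l) : ∃ f : l.ord.ToType → α, StrictMono f := by
  choose next hnext using fun S : {S : Set α // #S < l} => exists_forall_lt_of_mk_lt hl hα hIio S.2
  have hsmall (i : l.ord.ToType) (g : ∀ j < i, α) : #(range fun j : Iio i => g j j.2) < l :=
    mk_range_le.trans_lt (by simpa using mk_Iio_lt i)
  let f := IsWellFounded.fix (· < ·) fun i g => next ⟨_, hsmall i g⟩
  refine ⟨f, fun j i hji => ?_⟩
  have hfi : f i = next ⟨_, hsmall i fun k _ => f k⟩ := IsWellFounded.fix_eq (· < ·) _ i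
  exact hfi ▸ hnext _ _ ⟨⟨j, hji⟩, rfl⟩

lemma exists_strictAnti_of_mk_Ioi_lt (hl : l.IsRegular) (hα : #α = l)
    (hIoi : ∀ a : α, #(Ioi a) < l) : ∃ f : l.ord.ToType → α, StrictAnti f := by
  obtain ⟨f, hf⟩ := exists_strictMono_of_mk_Iio_lt (α := αᵒᵈ) hl hα hIoi
  exact ⟨fun i => OrderDual.ofDual (f i), fun _ _ h => hf h⟩

end

theorem stmt19_general (l : Cardinal.{u}) (hl : l.IsRegular) (X : Type u)
    [LinearOrder X]
    (hY : ∃ Y : Set X, #Y = l ∧ ∀ y ∈ Y,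
      (#{z ∈ Y | z < y} < l ∧ ¬ #{z ∈ Y | y < z} < l) ∨
      (¬ #{z ∈ Y | z < y} < l ∧ #{z ∈ Y | y < z} < l)) :
    (∃ f : l.ord.ToType → X, StrictMono f) ∨
    (∃ f : l.ord.ToType → X, StrictAnti f) := by
  obtain ⟨Y, hYcard, hYside⟩ := hY
  set A : Set X := {y ∈ Y | #{z ∈ Y | z < y} < l}
  set B : Set X := {y ∈ Y | #{z ∈ Y | y < z} < l}
  have hAB : A ∪ B = Y := by
    refine Subset.antisymm (union_subset (sep_subset _ _) (sep_subset _ _)) fun y hy => ?_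
    rcases hYside y hy with h | h
    exacts [Or.inl ⟨hy, h.1⟩, Or.inr ⟨hy, h.2⟩]
  rcases mk_eq_or_mk_eq_of_union_eq hl.aleph0_le hAB hYcard with hA | hB
  · obtain ⟨f, hf⟩ := exists_strictMono_of_mk_Iio_lt hl hA fun a =>
      (mk_Iio_subtype A a).trans_lt <| (mk_le_mk_of_subset
        (fun z hz => ⟨hz.1.1, hz.2⟩ : {z ∈ A | z < (a : X)} ⊆ {z ∈ Y | z < a})).trans_lt a.2.2
    exact Or.inl ⟨fun i => f i, Subtype.strictMono_coe _ |>.comp hf⟩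
  · obtain ⟨f, hf⟩ := exists_strictAnti_of_mk_Ioi_lt hl hB fun b =>
      (mk_Ioi_subtype B b).trans_lt <| (mk_le_mk_of_subset
        (fun z hz => ⟨hz.1.1, hz.2⟩ : {z ∈ B | (b : X) < z} ⊆ {z ∈ Y | b < z})).trans_lt b.2.2
    exact Or.inr ⟨fun i => f i, Subtype.strictMono_coe _ |>.comp_strictAnti hf⟩

/-- Case (1) of Theorem 2.2: if some `Y ⊆ X` of cardinality `l` is such that
each of its points has exactly one small side in `Y`, then `X` has a subset of
order type `l` or of reverse order type `l`. -/
theorem stmt19 (l : Cardinal.{u}) (hl : l.IsRegular) (X : Type u)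
    [LinearOrder X] (hX : #X = l)
    (hY : ∃ Y : Set X, #Y = l ∧ ∀ y ∈ Y,
      (#{z ∈ Y | z < y} < l ∧ ¬ #{z ∈ Y | y < z} < l) ∨
      (¬ #{z ∈ Y | z < y} < l ∧ #{z ∈ Y | y < z} < l)) :
    (∃ f : l.ord.ToType → X, StrictMono f) ∨
    (∃ f : l.ord.ToType → X, StrictAnti f) :=
  stmt19_general l hl X hY
end
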